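/- arXiv:2302.01146 — 6 statements merged into one kernel-verified Lean document; each statement's English description precedes it below -/
import Mathlib

section
/- Let E ⊂ ℝ² be open and bounded, let w : ℝ² → ℝ be continuous and nonnegative, and let G : ℝ → ℝ be continuous and nondecreasing. Suppose ψ₁, ψ₂ : ℝ² → ℝ are continuous on the closure of E, twice differentiable on E, satisfy Δψᵢ(x) = w(x)·G(ψᵢ(x)) for all x ∈ E (i = 1,2), and ψ₁ = ψ₂ on the topological boundary of E. Then ψ₁ = ψ₂ on the closure of E. -/
/-- The Laplacian of `φ : ℝ² → ℝ`, i.e. the sum of the two second partial derivatives. -/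
noncomputable def laplacian (φ : EuclideanSpace ℝ (Fin 2) → ℝ)
    (x : EuclideanSpace ℝ (Fin 2)) : ℝ :=
  ∑ i : Fin 2,
    fderiv ℝ (fun y => fderiv ℝ φ y (EuclideanSpace.single i 1)) x (EuclideanSpace.single i 1)

open Set Filter Topology

local notation "ES" => EuclideanSpace ℝ (Fin 2)

section Aux

/-- If `g` is differentiable near `0` with derivative `g'`, `g'` is differentiable at `0`
with derivative `c`, and `g` has a local max at `0`, then `c ≤ 0`. -/
lemma Stmt2.oneD {g g' : ℝ → ℝ} {c δ : ℝ} (hδ : 0 < δ)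
    (hg : ∀ t ∈ Set.Ioo (-δ) δ, HasDerivAt g (g' t) t)
    (hg' : HasDerivAt g' c 0) (hmax : IsLocalMax g 0) : c ≤ 0 := by
  by_contra hc
  push_neg at hc
  have h0 : (0:ℝ) ∈ Set.Ioo (-δ) δ := by constructor <;> linarith
  have hg'0 : g' 0 = 0 := hmax.hasDerivAt_eq_zero (hg 0 h0)
  have hslope : Tendsto (fun t => g' t / t) (𝓝[>] (0:ℝ)) (𝓝 c) := by
    have := hasDerivAt_iff_tendsto_slope.1 hg'
    have := this.mono_left (nhdsWithin_mono 0 (by intro t ht; exact ne_of_gt ht : Set.Ioi (0:ℝ) ⊆ {(0:ℝ)}ᶜ))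
    refine this.congr ?_
    intro t
    simp [slope_def_field, hg'0, div_eq_inv_mul]
  have hpos : ∀ᶠ t in 𝓝[>] (0:ℝ), 0 < g' t / t := hslope.eventually (eventually_gt_nhds hc)
  rw [eventually_nhdsWithin_iff] at hpos
  rw [Metric.eventually_nhds_iff] at hpos
  obtain ⟨δ₁, hδ₁, h1⟩ := hpos
  have hmax' := hmax
  rw [IsLocalMax, IsMaxFilter, Metric.eventually_nhds_iff] at hmax'
  obtain ⟨δ₂, hδ₂, h2⟩ := hmax'
  set t₀ := min (min δ δ₁) δ₂ / 2 with ht₀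
  have ht₀pos : 0 < t₀ := by positivity
  have ht₀δ : t₀ < δ := by
    have : min (min δ δ₁) δ₂ ≤ δ := le_trans (min_le_left _ _) (min_le_left _ _)
    linarith
  have ht₀δ₁ : t₀ < δ₁ := by
    have : min (min δ δ₁) δ₂ ≤ δ₁ := le_trans (min_le_left _ _) (min_le_right _ _)
    linarith
  have ht₀δ₂ : t₀ < δ₂ := by
    have : min (min δ δ₁) δ₂ ≤ δ₂ := min_le_right _ _
    linarith
  have hcont : ContinuousOn g (Set.Icc 0 t₀) := by
    intro t ht
    exact ((hg t ⟨by linarith [ht.1], by linarith [ht.2]⟩).continuousAt).continuousWithinAt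
  have hderiv : ∀ t ∈ Set.Ioo (0:ℝ) t₀, HasDerivAt g (g' t) t := fun t ht =>
    hg t ⟨by linarith [ht.1], by linarith [ht.2]⟩
  obtain ⟨ξ, hξ, hξeq⟩ := exists_hasDerivAt_eq_slope g g' ht₀pos hcont hderiv
  have hgξ : 0 < g' ξ := by
    have hd : dist ξ (0:ℝ) < δ₁ := by
      rw [Real.dist_eq, sub_zero, abs_of_pos hξ.1]; linarith [hξ.2]
    have := h1 hd hξ.1
    rcases div_pos_iff.1 this with h | h
    · exact h.1
    · linarith [h.2, hξ.1]
  have hle : g t₀ ≤ g 0 := h2 (by rw [Real.dist_eq, sub_zero, abs_of_pos ht₀pos]; exact ht₀δ₂)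
  rw [hξeq] at hgξ
  rw [sub_zero] at hgξ
  have : 0 < g t₀ - g 0 := by
    have h3 := mul_pos hgξ ht₀pos
    rwa [div_mul_cancel₀ _ (ne_of_gt ht₀pos)] at h3
  linarith

/-- At an interior local max of a twice differentiable function, each diagonal second
directional derivative is nonpositive. -/
lemma Stmt2.D2_nonpos {v : ES → ℝ} {U : Set ES} (hU : IsOpen U) {z : ES} (hz : z ∈ U)
    (hd : ∀ x ∈ U, DifferentiableAt ℝ v x)
    (hd2 : DifferentiableAt ℝ (fderiv ℝ v) z)
    (hmax : IsLocalMax v z) (e : ES) :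
    fderiv ℝ (fun y => fderiv ℝ v y e) z e ≤ 0 := by
  set line : ℝ → ES := fun t => z + t • e with hline
  have hline0 : line 0 = z := by simp [hline]
  have hlineDeriv : ∀ t : ℝ, HasDerivAt line e t := by
    intro t
    simpa [hline] using ((hasDerivAt_id t).smul_const e).const_add z
  have hlineCont : Continuous line := by continuity
  obtain ⟨δ, hδpos, hδ⟩ : ∃ δ > 0, ∀ t ∈ Set.Ioo (-δ) δ, line t ∈ U := by
    have : ∀ᶠ t in 𝓝 (0:ℝ), line t ∈ U := by
      have h := hlineCont.continuousAt (x := 0)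
      exact h.preimage_mem_nhds (hU.mem_nhds (hline0.symm ▸ hz))
    rw [Metric.eventually_nhds_iff] at this
    obtain ⟨ε, hε, h⟩ := this
    exact ⟨ε, hε, fun t ht => h (by rw [Real.dist_eq, sub_zero]; exact abs_lt.2 ht)⟩
  set g : ℝ → ℝ := fun t => v (line t) with hgdef
  set g' : ℝ → ℝ := fun t => fderiv ℝ v (line t) e with hg'def
  have hg : ∀ t ∈ Set.Ioo (-δ) δ, HasDerivAt g (g' t) t := by
    intro t ht
    exact ((hd (line t) (hδ t ht)).hasFDerivAt).comp_hasDerivAt t (hlineDeriv t)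
  have hda : DifferentiableAt ℝ (fun y => fderiv ℝ v y e) z := by
    have := (ContinuousLinearMap.apply ℝ ℝ e).differentiableAt.comp z hd2
    exact this
  have hg' : HasDerivAt g' (fderiv ℝ (fun y => fderiv ℝ v y e) z e) 0 := by
    have h1 : HasFDerivAt (fun y => fderiv ℝ v y e) (fderiv ℝ (fun y => fderiv ℝ v y e) z) z :=
      hda.hasFDerivAt
    rw [← hline0] at h1
    have h2 := h1.comp_hasDerivAt 0 (hlineDeriv 0)
    rw [hline0] at h2
    exact h2
  have hmaxg : IsLocalMax g 0 := by
    have htend : Tendsto line (𝓝 0) (𝓝 z) := by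
      rw [← hline0]; exact hlineCont.continuousAt
    have := htend.eventually hmax
    simpa [IsLocalMax, IsMaxFilter, hgdef, hline0] using this
  exact Stmt2.oneD hδpos hg hg' hmaxg

/-- The coordinate projection onto the first coordinate. -/
noncomputable def Stmt2.P : ES →L[ℝ] ℝ := EuclideanSpace.proj (0 : Fin 2)

/-- The auxiliary quadratic `q x = (x 0)²`. -/
noncomputable def Stmt2.q : ES → ℝ := fun x => Stmt2.P x * Stmt2.P x

namespace Stmt2

lemma q_hasFDerivAt (y : ES) : HasFDerivAt q ((2 * P y) • P) y := by
  have h := (P.hasFDerivAt (x := y)).mul (P.hasFDerivAt (x := y))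
  show HasFDerivAt (⇑P * ⇑P) _ y
  rw [two_mul, add_smul]
  exact h

lemma q_fderiv : fderiv ℝ q = fun y => (2 * P y) • P := funext fun y => (q_hasFDerivAt y).fderiv

lemma q_diff : Differentiable ℝ q := fun y => (q_hasFDerivAt y).differentiableAt

lemma q_fderiv_diff : Differentiable ℝ (fderiv ℝ q) := by
  rw [q_fderiv]
  have : (fun y : ES => (2 * P y) • P) = ⇑(((2:ℝ) • P).smulRight P) := by
    funext y
    simp [ContinuousLinearMap.smulRight_apply, smul_smul]
  rw [this]
  exact (((2:ℝ) • P).smulRight P).differentiable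

lemma q_D2 (z : ES) (e : ES) :
    fderiv ℝ (fun y => fderiv ℝ q y e) z e = 2 * P e * P e := by
  have h : (fun y => fderiv ℝ q y e) = ⇑((2 * P e) • P) := by
    funext y
    rw [q_fderiv]
    simp [ContinuousLinearMap.smulRight_apply]
    ring
  rw [h, ContinuousLinearMap.fderiv]
  simp

lemma q_laplacian (z : ES) : laplacian q z = 2 := by
  unfold laplacian
  rw [Fin.sum_univ_two, q_D2, q_D2]
  have h0 : P (EuclideanSpace.single (0 : Fin 2) (1:ℝ)) = 1 := by
    simp [P, EuclideanSpace.proj]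
  have h1 : P (EuclideanSpace.single (1 : Fin 2) (1:ℝ)) = 0 := by
    simp [P, EuclideanSpace.proj]
  rw [h0, h1]
  ring

lemma q_nonneg (x : ES) : 0 ≤ q x := mul_self_nonneg _

lemma q_le (x : ES) : q x ≤ ‖x‖ ^ 2 := by
  have h : |P x| ≤ ‖x‖ := by
    have h2 : (P x) ^ 2 ≤ ∑ i : Fin 2, ‖x i‖ ^ 2 := by
      have : (P x) ^ 2 = ‖x 0‖ ^ 2 := by simp [P, EuclideanSpace.proj, sq_abs]
      rw [this]
      exact Finset.single_le_sum (f := fun i => ‖x i‖ ^ 2) (fun i _ => by positivity)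
        (Finset.mem_univ 0)
    rw [← Real.sqrt_sq (abs_nonneg (P x)), EuclideanSpace.norm_eq]
    exact Real.sqrt_le_sqrt (by rwa [sq_abs])
  calc q x = |P x| * |P x| := by rw [← abs_mul, abs_mul_self]; rfl
  _ ≤ ‖x‖ * ‖x‖ := mul_le_mul h h (abs_nonneg _) (norm_nonneg _)
  _ = ‖x‖ ^ 2 := (sq ‖x‖).symm

variable {f g : ES → ℝ} {U : Set ES} {z : ES}

lemma fderiv_lin_eventually (hU : IsOpen U) (hz : z ∈ U)
    (hfd : ∀ x ∈ U, DifferentiableAt ℝ f x) (hgd : ∀ x ∈ U, DifferentiableAt ℝ g x) (a b : ℝ) :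
    (fderiv ℝ (fun x => a * f x + b * g x)) =ᶠ[nhds z]
      (fun y => a • fderiv ℝ f y + b • fderiv ℝ g y) := by
  filter_upwards [hU.mem_nhds hz] with y hy
  rw [fderiv_fun_add ((hfd y hy).const_mul a) ((hgd y hy).const_mul b),
    fderiv_const_mul (hfd y hy) a, fderiv_const_mul (hgd y hy) b]

lemma comb_fderiv_diff (hU : IsOpen U) (hz : z ∈ U)
    (hfd : ∀ x ∈ U, DifferentiableAt ℝ f x) (hf2 : DifferentiableAt ℝ (fderiv ℝ f) z)
    (hgd : ∀ x ∈ U, DifferentiableAt ℝ g x) (hg2 : DifferentiableAt ℝ (fderiv ℝ g) z)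
    (a b : ℝ) :
    DifferentiableAt ℝ (fderiv ℝ (fun x => a * f x + b * g x)) z := by
  have h := fderiv_lin_eventually hU hz hfd hgd a b
  rw [Filter.EventuallyEq.differentiableAt_iff h]
  exact (hf2.const_smul a).add (hg2.const_smul b)

lemma D2_lin (hU : IsOpen U) (hz : z ∈ U)
    (hfd : ∀ x ∈ U, DifferentiableAt ℝ f x) (hf2 : DifferentiableAt ℝ (fderiv ℝ f) z)
    (hgd : ∀ x ∈ U, DifferentiableAt ℝ g x) (hg2 : DifferentiableAt ℝ (fderiv ℝ g) z)
    (a b : ℝ) (e : ES) :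
    fderiv ℝ (fun y => fderiv ℝ (fun x => a * f x + b * g x) y e) z e
      = a * fderiv ℝ (fun y => fderiv ℝ f y e) z e
        + b * fderiv ℝ (fun y => fderiv ℝ g y e) z e := by
  have h : (fun y => fderiv ℝ (fun x => a * f x + b * g x) y e) =ᶠ[nhds z]
      (fun y => a * fderiv ℝ f y e + b * fderiv ℝ g y e) := by
    filter_upwards [fderiv_lin_eventually hU hz hfd hgd a b] with y hy
    rw [hy]; simp
  rw [Filter.EventuallyEq.fderiv_eq h]
  have hFf : DifferentiableAt ℝ (fun y => fderiv ℝ f y e) z :=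
    (ContinuousLinearMap.apply ℝ ℝ e).differentiableAt.comp z hf2
  have hFg : DifferentiableAt ℝ (fun y => fderiv ℝ g y e) z :=
    (ContinuousLinearMap.apply ℝ ℝ e).differentiableAt.comp z hg2
  rw [fderiv_fun_add (hFf.const_mul a) (hFg.const_mul b), fderiv_const_mul hFf a,
    fderiv_const_mul hFg b]
  simp

lemma laplacian_lin (hU : IsOpen U) (hz : z ∈ U)
    (hfd : ∀ x ∈ U, DifferentiableAt ℝ f x) (hf2 : DifferentiableAt ℝ (fderiv ℝ f) z)
    (hgd : ∀ x ∈ U, DifferentiableAt ℝ g x) (hg2 : DifferentiableAt ℝ (fderiv ℝ g) z)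
    (a b : ℝ) :
    laplacian (fun x => a * f x + b * g x) z = a * laplacian f z + b * laplacian g z := by
  unfold laplacian
  rw [Fin.sum_univ_two, Fin.sum_univ_two, Fin.sum_univ_two,
    D2_lin hU hz hfd hf2 hgd hg2 a b, D2_lin hU hz hfd hf2 hgd hg2 a b]
  ring

/-- Weak maximum principle for the semilinear operator. -/
lemma maxp {E : Set ES} (hE : IsOpen E) (hEb : Bornology.IsBounded E)
    {u : ES → ℝ} (huc : ContinuousOn u (closure E))
    (hud : ∀ x ∈ E, DifferentiableAt ℝ u x)
    (hu2 : ∀ x ∈ E, DifferentiableAt ℝ (fderiv ℝ u) x)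
    (hsign : ∀ x ∈ E, 0 < u x → 0 ≤ laplacian u x)
    (hb : ∀ x ∈ frontier E, u x ≤ 0) :
    ∀ x ∈ closure E, u x ≤ 0 := by
  intro x₀ hx₀
  by_contra hM'
  push_neg at hM'
  set M := u x₀ with hMdef
  have hM : 0 < M := hM'
  have hK : IsCompact (closure E) := hEb.isCompact_closure
  obtain ⟨R, hR⟩ := hK.isBounded.subset_closedBall 0
  have hR0 : 0 ≤ R := by
    have := hR hx₀
    rw [Metric.mem_closedBall] at this
    exact le_trans dist_nonneg this
  set C := R ^ 2 with hCdef
  have hC0 : 0 ≤ C := by positivity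
  have hqC : ∀ x ∈ closure E, q x ≤ C := by
    intro x hx
    have hxR : ‖x‖ ≤ R := by
      have := hR hx
      rwa [Metric.mem_closedBall, dist_zero_right] at this
    exact le_trans (q_le x) (by
      have := pow_le_pow_left₀ (norm_nonneg x) hxR 2
      simpa [hCdef] using this)
  set ε := M / (2 * (C + 1)) with hεdef
  have hεpos : 0 < ε := by positivity
  have hεC : ε * C < M := by
    rw [hεdef, div_mul_eq_mul_div, div_lt_iff₀ (by positivity)]
    nlinarith
  set v : ES → ℝ := fun x => 1 * u x + ε * q x with hvdef
  have hqcont : Continuous q := q_diff.continuous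
  have hvcont : ContinuousOn v (closure E) := by
    apply ContinuousOn.add
    · exact (continuousOn_const.mul huc)
    · exact (continuousOn_const.mul hqcont.continuousOn)
  obtain ⟨z, hzK, hzmax⟩ := hK.exists_isMaxOn ⟨x₀, hx₀⟩ hvcont
  have hvx₀ : M ≤ v x₀ := by
    have := q_nonneg x₀
    simp only [hvdef]
    nlinarith
  have hvz : M ≤ v z := le_trans hvx₀ (hzmax hx₀)
  have hzE : z ∈ E := by
    rcases (closure_eq_self_union_frontier E ▸ hzK) with h | h
    · exact h
    · exfalso
      have h1 : u z ≤ 0 := hb z h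
      have h2 : q z ≤ C := hqC z (frontier_subset_closure h)
      have : v z ≤ ε * C := by
        simp only [hvdef]
        nlinarith
      linarith
  have huz : 0 < u z := by
    have h2 : q z ≤ C := hqC z hzK
    have : v z = u z + ε * q z := by simp [hvdef]
    nlinarith
  have hlap : 0 ≤ laplacian u z := hsign z hzE huz
  have hlocmax : IsLocalMax v z := by
    filter_upwards [hE.mem_nhds hzE] with y hy
    exact hzmax (subset_closure hy)
  have hvd : ∀ x ∈ E, DifferentiableAt ℝ v x := fun x hx =>
    ((hud x hx).const_mul 1).add ((q_diff x).const_mul ε)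
  have hv2 : DifferentiableAt ℝ (fderiv ℝ v) z :=
    comb_fderiv_diff hE hzE hud (hu2 z hzE) (fun x _ => q_diff x) (q_fderiv_diff z) 1 ε
  have hlapv_le : laplacian v z ≤ 0 := by
    unfold laplacian
    apply Finset.sum_nonpos
    intro i _
    exact D2_nonpos hE hzE hvd hv2 hlocmax (EuclideanSpace.single i 1)
  have hlapv_eq : laplacian v z = 1 * laplacian u z + ε * laplacian q z :=
    laplacian_lin hE hzE hud (hu2 z hzE) (fun x _ => q_diff x) (q_fderiv_diff z) 1 ε
  rw [q_laplacian] at hlapv_eq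
  linarith

end Stmt2

end Aux

/-- Uniqueness (comparison principle) for the semilinear equation `Δψ = w · G(ψ)` on a
bounded open set `E`, with `w ≥ 0` continuous and `G` continuous nondecreasing: two solutions
agreeing on the boundary agree on the closure. -/
theorem stmt2 (E : Set (EuclideanSpace ℝ (Fin 2))) (hE : IsOpen E)
    (hEb : Bornology.IsBounded E)
    (w : EuclideanSpace ℝ (Fin 2) → ℝ) (hwc : Continuous w) (hw0 : ∀ x, 0 ≤ w x)
    (G : ℝ → ℝ) (hGc : Continuous G) (hGmono : Monotone G)
    (ψ₁ ψ₂ : EuclideanSpace ℝ (Fin 2) → ℝ)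
    (hψ₁c : ContinuousOn ψ₁ (closure E)) (hψ₂c : ContinuousOn ψ₂ (closure E))
    (hψ₁d : ∀ x ∈ E, DifferentiableAt ℝ ψ₁ x ∧ DifferentiableAt ℝ (fderiv ℝ ψ₁) x)
    (hψ₂d : ∀ x ∈ E, DifferentiableAt ℝ ψ₂ x ∧ DifferentiableAt ℝ (fderiv ℝ ψ₂) x)
    (hψ₁eq : ∀ x ∈ E, laplacian ψ₁ x = w x * G (ψ₁ x))
    (hψ₂eq : ∀ x ∈ E, laplacian ψ₂ x = w x * G (ψ₂ x))
    (hbd : ∀ x ∈ frontier E, ψ₁ x = ψ₂ x) :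
    ∀ x ∈ closure E, ψ₁ x = ψ₂ x := by
  -- the difference function, written in the canonical `a*f + b*g` form
  have key : ∀ (φ χ : EuclideanSpace ℝ (Fin 2) → ℝ),
      ContinuousOn φ (closure E) → ContinuousOn χ (closure E) →
      (∀ x ∈ E, DifferentiableAt ℝ φ x ∧ DifferentiableAt ℝ (fderiv ℝ φ) x) →
      (∀ x ∈ E, DifferentiableAt ℝ χ x ∧ DifferentiableAt ℝ (fderiv ℝ χ) x) →
      (∀ x ∈ E, laplacian φ x = w x * G (φ x)) →
      (∀ x ∈ E, laplacian χ x = w x * G (χ x)) →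
      (∀ x ∈ frontier E, φ x = χ x) →
      ∀ x ∈ closure E, 1 * φ x + (-1) * χ x ≤ 0 := by
    intro φ χ hφc hχc hφd hχd hφeq hχeq hb
    set u : EuclideanSpace ℝ (Fin 2) → ℝ := fun x => 1 * φ x + (-1) * χ x with hudef
    have huc : ContinuousOn u (closure E) :=
      (continuousOn_const.mul hφc).add (continuousOn_const.mul hχc)
    have hud : ∀ x ∈ E, DifferentiableAt ℝ u x := fun x hx =>
      ((hφd x hx).1.const_mul 1).add ((hχd x hx).1.const_mul (-1))
    have hu2 : ∀ x ∈ E, DifferentiableAt ℝ (fderiv ℝ u) x := fun x hx =>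
      Stmt2.comb_fderiv_diff hE hx (fun y hy => (hφd y hy).1) (hφd x hx).2
        (fun y hy => (hχd y hy).1) (hχd x hx).2 1 (-1)
    have hsign : ∀ x ∈ E, 0 < u x → 0 ≤ laplacian u x := by
      intro x hx hux
      have hlap : laplacian u x = 1 * laplacian φ x + (-1) * laplacian χ x :=
        Stmt2.laplacian_lin hE hx (fun y hy => (hφd y hy).1) (hφd x hx).2
          (fun y hy => (hχd y hy).1) (hχd x hx).2 1 (-1)
      rw [hlap, hφeq x hx, hχeq x hx]
      have hle : χ x ≤ φ x := by
        simp only [hudef] at hux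
        linarith
      have := hGmono hle
      have := hw0 x
      nlinarith
    have hb' : ∀ x ∈ frontier E, u x ≤ 0 := by
      intro x hx
      simp only [hudef, hb x hx]
      ring_nf
      exact le_refl 0
    exact Stmt2.maxp hE hEb huc hud hu2 hsign hb'
  intro x hx
  have h1 := key ψ₁ ψ₂ hψ₁c hψ₂c hψ₁d hψ₂d hψ₁eq hψ₂eq hbd x hx
  have h2 := key ψ₂ ψ₁ hψ₂c hψ₁c hψ₂d hψ₁d hψ₂eq hψ₁eq (fun y hy => (hbd y hy).symm) x hx
  linarith
end

section
/- For every r ≥ 1 and every x ∈ ℂ with |x| = r, the integral over the open unit disk of 1/|x − y| with respect to planar Lebesgue measure in y satisfies ∫_𝔻 |x − y|^{−1} dy = 2π · Σ_{k=0}^{∞} (binom(2k,k)/4^k)² · (1/(2k+2)) · r^{−(2k+1)}. -/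
open Metric MeasureTheory Complex Set

noncomputable def aW : ℕ → ℝ := fun k => ((2 * k).choose k : ℝ) / 4 ^ k

lemma aW_zero : aW 0 = 1 := by simp [aW]

lemma aW_pos (k : ℕ) : 0 < aW k := by
  have h : 0 < ((2 * k).choose k : ℝ) := by
    exact_mod_cast Nat.choose_pos (by omega)
  exact div_pos h (by positivity)

lemma aW_rec (k : ℕ) : 2 * ((k:ℝ) + 1) * aW (k + 1) = (2 * k + 1) * aW k := by
  have h := Nat.succ_mul_centralBinom_succ k
  have h' : ((k:ℝ) + 1) * ((2 * (k+1)).choose (k+1) : ℝ)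
      = 2 * (2 * (k:ℝ) + 1) * ((2*k).choose k : ℝ) := by
    have := congrArg (fun n : ℕ => (n : ℝ)) h
    push_cast [Nat.centralBinom] at this
    convert this using 3 <;> ring
  have h4 : (4:ℝ) ^ (k+1) = 4 * 4 ^ k := by ring
  have hp : (0:ℝ) < 4 ^ k := by positivity
  simp only [aW, h4]
  field_simp
  nlinarith [h']

lemma aW_le_one (k : ℕ) : aW k ≤ 1 := by
  induction k with
  | zero => simp [aW_zero]
  | succ n ih =>
    have hrec := aW_rec n
    have hp := aW_pos n
    nlinarith

lemma aW_sq (k : ℕ) : aW k ^ 2 * (2 * k + 1) ≤ 1 := by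
  induction k with
  | zero => simp [aW_zero]
  | succ n ih =>
    have hrec := aW_rec n
    have hp := aW_pos n
    have hp' := aW_pos (n+1)
    push_cast
    have h2 : (2*(n:ℝ)+2)^2 * (aW (n+1))^2 = (2*n+1)^2 * aW n^2 := by
      linear_combination (2*((n:ℝ)+1)*aW (n+1) + (2*(n:ℝ)+1)*aW n) * hrec
    have h3 : (2*(n:ℝ)+2)^2 * (aW (n+1)^2 * (2*(n+1)+1)) ≤ (2*(n:ℝ)+2)^2 * 1 := by
      have : (2*(n:ℝ)+2)^2 * (aW (n+1)^2 * (2*(n+1)+1)) = (aW n^2*(2*n+1)) * ((2*n+1)*(2*n+3)) := by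
        nlinarith [h2]
      rw [this]
      calc (aW n^2*(2*(n:ℝ)+1)) * ((2*(n:ℝ)+1)*(2*(n:ℝ)+3))
          ≤ 1 * ((2*(n:ℝ)+1)*(2*(n:ℝ)+3)) :=
            mul_le_mul_of_nonneg_right ih (by positivity)
        _ ≤ (2*(n:ℝ)+2)^2 * 1 := by nlinarith
    have h6 : (0:ℝ) < (2*(n:ℝ)+2)^2 := by positivity
    nlinarith [h3]

lemma aW_conv (n : ℕ) : ∑ j ∈ Finset.range (n + 1), aW j * aW (n - j) = 1 := by
  induction n with
  | zero => simp [aW_zero]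
  | succ n ih =>
    have hcast : ∀ j ≤ n + 1, ((n + 1 - j : ℕ) : ℝ) = (n:ℝ) + 1 - j := by
      intro j hj; push_cast [Nat.cast_sub hj]; ring
    have e1 : ((n:ℝ)+1) * ∑ j ∈ Finset.range (n+2), aW j * aW (n+1-j)
        = 2 * ∑ j ∈ Finset.range (n+2), (j:ℝ) * (aW j * aW (n+1-j)) := by
      have e2 : ∑ j ∈ Finset.range (n+2), (((n:ℝ)+1-j)) * (aW j * aW (n+1-j))
          = ∑ j ∈ Finset.range (n+2), (j:ℝ) * (aW j * aW (n+1-j)) := by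
        rw [← Finset.sum_range_reflect]
        apply Finset.sum_congr rfl
        intro j hj
        have hj' : j ≤ n + 1 := by simpa [Nat.lt_succ_iff] using hj
        simp only [show n + 2 - 1 = n + 1 from rfl]
        have h2 : n + 1 - (n + 1 - j) = j := by omega
        have h3 : ((n + 1 - j : ℕ) : ℝ) = (n:ℝ) + 1 - j := hcast _ hj'
        rw [h2, h3]
        ring
      calc ((n:ℝ)+1) * ∑ j ∈ Finset.range (n+2), aW j * aW (n+1-j)
          = ∑ j ∈ Finset.range (n+2),
              ((j:ℝ) * (aW j * aW (n+1-j)) + ((n:ℝ)+1-j) * (aW j * aW (n+1-j))) := by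
            rw [Finset.mul_sum]; apply Finset.sum_congr rfl; intro j hj; ring
        _ = _ := by rw [Finset.sum_add_distrib, e2]; ring
    have e3 : ∑ j ∈ Finset.range (n+2), (j:ℝ) * (aW j * aW (n+1-j))
        = ∑ j ∈ Finset.range (n+1), ((j:ℝ)+1) * (aW (j+1) * aW (n-j)) := by
      rw [Finset.sum_range_succ']
      simp
    have e4 : 2 * ∑ j ∈ Finset.range (n+1), ((j:ℝ)+1) * (aW (j+1) * aW (n-j))
        = ∑ j ∈ Finset.range (n+1), (2*(j:ℝ)+1) * (aW j * aW (n-j)) := by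
      rw [Finset.mul_sum]
      apply Finset.sum_congr rfl
      intro j hj
      have := aW_rec j
      linear_combination aW (n - j) * this
    have e5 : 2 * ∑ j ∈ Finset.range (n+1), (2*(j:ℝ)+1) * (aW j * aW (n-j))
        = (2*(n:ℝ)+2) * ∑ j ∈ Finset.range (n+1), aW j * aW (n-j) := by
      have e6 : ∑ j ∈ Finset.range (n+1), (2*((n:ℝ)-j)+1) * (aW j * aW (n-j))
          = ∑ j ∈ Finset.range (n+1), (2*(j:ℝ)+1) * (aW j * aW (n-j)) := by
        rw [← Finset.sum_range_reflect]
        apply Finset.sum_congr rfl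
        intro j hj
        have hj' : j ≤ n := by simpa [Nat.lt_succ_iff] using hj
        simp only [show n + 1 - 1 = n from rfl]
        have h2 : n - (n - j) = j := by omega
        have h3 : ((n - j : ℕ) : ℝ) = (n:ℝ) - j := by push_cast [Nat.cast_sub hj']; ring
        rw [h2, h3]
        ring
      calc 2 * ∑ j ∈ Finset.range (n+1), (2*(j:ℝ)+1) * (aW j * aW (n-j))
          = ∑ j ∈ Finset.range (n+1), ((2*(j:ℝ)+1) * (aW j * aW (n-j))
              + (2*((n:ℝ)-j)+1) * (aW j * aW (n-j))) := by
            rw [Finset.sum_add_distrib, e6]; ring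
        _ = _ := by rw [Finset.mul_sum]; apply Finset.sum_congr rfl; intro j hj; ring
    have hne : ((n:ℝ)+1) ≠ 0 := by positivity
    apply mul_left_cancel₀ hne
    rw [e1, e3, e4]
    rw [ih] at e5
    linarith [e5]

lemma aW_summable_norm {w : ℂ} (hw : ‖w‖ < 1) :
    Summable fun k => ‖(aW k : ℂ) * w ^ k‖ := by
  refine Summable.of_nonneg_of_le (fun k => norm_nonneg _) (fun k => ?_)
    (summable_geometric_of_lt_one (norm_nonneg w) hw)
  rw [norm_mul, norm_pow, Complex.norm_real, Real.norm_eq_abs,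
    abs_of_pos (aW_pos k)]
  exact mul_le_of_le_one_left (by positivity) (aW_le_one k)

lemma aW_series_sq {w : ℂ} (hw : ‖w‖ < 1) :
    (∑' k : ℕ, (aW k : ℂ) * w ^ k) ^ 2 = (1 - w)⁻¹ := by
  have hs := aW_summable_norm hw
  rw [sq, tsum_mul_tsum_eq_tsum_sum_range_of_summable_norm hs hs]
  have key : ∀ n : ℕ, ∑ k ∈ Finset.range (n+1),
      ((aW k : ℂ) * w ^ k) * ((aW (n-k) : ℂ) * w ^ (n-k)) = w ^ n := by
    intro n
    have hterm : ∀ k ∈ Finset.range (n+1),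
        ((aW k : ℂ) * w ^ k) * ((aW (n-k) : ℂ) * w ^ (n-k))
          = ((aW k * aW (n-k) : ℝ) : ℂ) * w ^ n := by
      intro k hk
      have hk' : k ≤ n := by simpa [Nat.lt_succ_iff] using hk
      have hpow : w ^ k * w ^ (n - k) = w ^ n := by
        rw [← pow_add]; congr 1; omega
      push_cast
      rw [← hpow]; ring
    rw [Finset.sum_congr rfl hterm, ← Finset.sum_mul, ← Complex.ofReal_sum,
      aW_conv n]
    simp
  rw [tsum_congr key, tsum_geometric_of_norm_lt_one hw]

lemma aW_norm_series {w : ℂ} (hw : ‖w‖ < 1) :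
    (‖1 - w‖)⁻¹ = ‖∑' k : ℕ, (aW k : ℂ) * w ^ k‖ ^ 2 := by
  rw [← norm_pow, aW_series_sq hw, norm_inv]

lemma my_integral_re {f : ℝ → ℂ} {s : Set ℝ} (hf : IntegrableOn f s) :
    ∫ θ in s, (f θ).re = (∫ θ in s, f θ).re := by
  simpa using integral_re hf

lemma exp_int_diff (n : ℤ) (hn : n ≠ 0) :
    ∫ θ in Ioo (-Real.pi) Real.pi, Complex.exp ((n:ℝ) * θ * Complex.I) = 0 := by
  have hn' : ((n:ℝ) : ℂ) ≠ 0 := by exact_mod_cast hn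
  have hc : ((n:ℝ) : ℂ) * Complex.I ≠ 0 := mul_ne_zero hn' Complex.I_ne_zero
  have hrw : ∀ θ : ℝ, ((n:ℝ) : ℂ) * θ * Complex.I = (((n:ℝ):ℂ) * Complex.I) * θ := by
    intro θ; ring
  simp_rw [hrw]
  rw [← MeasureTheory.integral_Ioc_eq_integral_Ioo,
    ← intervalIntegral.integral_of_le (by linarith [Real.pi_pos])]
  rw [integral_exp_mul_complex hc]
  have key : Complex.exp (((n:ℝ):ℂ) * Complex.I * ((Real.pi:ℝ):ℂ))
      = Complex.exp (((n:ℝ):ℂ) * Complex.I * ((-Real.pi : ℝ):ℂ)) := by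
    have h2 : (((n:ℝ):ℂ) * Complex.I * ((Real.pi:ℝ):ℂ))
        = ((n:ℝ):ℂ) * Complex.I * ((-Real.pi:ℝ):ℂ) + (n:ℂ) * (2 * (Real.pi:ℂ) * Complex.I) := by
      push_cast; ring
    rw [h2, Complex.exp_add, Complex.exp_int_mul_two_pi_mul_I, mul_one]
  rw [key, sub_self, zero_div]

noncomputable def eK (k : ℕ) (θ : ℝ) : ℂ := Complex.exp (k * θ * Complex.I)

noncomputable def uP (c : ℕ → ℂ) (p : ℕ × ℕ) (θ : ℝ) : ℝ :=
  (c p.1 * eK p.1 θ * ((starRingEnd ℂ) (c p.2 * eK p.2 θ))).re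

lemma eK_cont (k : ℕ) : Continuous (eK k) :=
  Complex.continuous_exp.comp (by continuity)

lemma eK_norm (k : ℕ) (θ : ℝ) : ‖eK k θ‖ = 1 := by
  have h : (k : ℂ) * θ * Complex.I = (((k : ℝ) * θ : ℝ) : ℂ) * Complex.I := by push_cast; ring
  rw [eK, h]
  exact Complex.norm_exp_ofReal_mul_I _

set_option maxHeartbeats 1000000 in
lemma parseval (c : ℕ → ℂ) (hc : Summable fun k => ‖c k‖) :
    ∫ θ in Ioo (-Real.pi) Real.pi, ‖∑' k : ℕ, c k * eK k θ‖ ^ 2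
      = 2 * Real.pi * ∑' k : ℕ, ‖c k‖ ^ 2 := by
  have econt := eK_cont
  have norm_e := eK_norm
  have hsum : ∀ θ, Summable fun k => ‖c k * eK k θ‖ := by
    intro θ
    simp_rw [norm_mul, norm_e, mul_one]
    exact hc
  have hconj : ∀ θ, Summable fun k => ‖(starRingEnd ℂ) (c k * eK k θ)‖ := by
    intro θ
    simp_rw [RCLike.norm_conj]
    exact hsum θ
  have point : ∀ θ : ℝ, ‖∑' k : ℕ, c k * eK k θ‖ ^ 2 = ∑' p : ℕ × ℕ, uP c p θ := by
    intro θ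
    have h1 : ‖∑' k : ℕ, c k * eK k θ‖ ^ 2
        = ((∑' k : ℕ, c k * eK k θ) * (starRingEnd ℂ) (∑' k : ℕ, c k * eK k θ)).re := by
      rw [Complex.mul_conj, Complex.normSq_eq_norm_sq]
      exact (Complex.ofReal_re _).symm
    rw [h1]
    have h2 : (starRingEnd ℂ) (∑' k : ℕ, c k * eK k θ)
        = ∑' k : ℕ, (starRingEnd ℂ) (c k * eK k θ) := by
      have hs2 : Summable fun k => c k * eK k θ := (hsum θ).of_norm
      have h3 := Complex.conjCLE.toContinuousLinearMap.map_tsum hs2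
      simpa using h3
    rw [h2, tsum_mul_tsum_of_summable_norm (hsum θ) (hconj θ),
      Complex.re_tsum (summable_mul_of_summable_norm (hsum θ) (hconj θ))]
    rfl
  have normbound : ∀ (p : ℕ × ℕ) (θ : ℝ), ‖uP c p θ‖ ≤ ‖c p.1‖ * ‖c p.2‖ := by
    intro p θ
    have h1 : ‖uP c p θ‖ ≤ ‖c p.1 * eK p.1 θ * ((starRingEnd ℂ) (c p.2 * eK p.2 θ))‖ := by
      rw [uP]; exact Complex.abs_re_le_norm _
    refine h1.trans (le_of_eq ?_)
    rw [norm_mul, norm_mul, RCLike.norm_conj, norm_mul, norm_e, norm_e, mul_one, mul_one]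
  have ucont : ∀ p : ℕ × ℕ, Continuous (uP c p) := by
    intro p
    apply Complex.continuous_re.comp
    exact ((continuous_const.mul (econt p.1)).mul
      (continuous_star.comp (continuous_const.mul (econt p.2))))
  have prodsum : Summable (fun p : ℕ × ℕ => ‖c p.1‖ * ‖c p.2‖) :=
    hc.mul_of_nonneg hc (fun k => norm_nonneg _) (fun k => norm_nonneg _)
  have hval : ∀ p : ℕ × ℕ, ∫ θ in Ioo (-Real.pi) Real.pi, uP c p θ
      = if p.1 = p.2 then ‖c p.1‖ ^ 2 * (2 * Real.pi) else 0 := by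
    rintro ⟨j, k⟩
    have hconjexp : ∀ θ : ℝ, (starRingEnd ℂ) (eK k θ) = Complex.exp (-((k:ℂ) * θ * Complex.I)) := by
      intro θ
      rw [eK, ← Complex.exp_conj]
      congr 1
      simp [map_mul, Complex.conj_I, Complex.conj_ofReal]
    have hrw : ∀ θ : ℝ, uP c (j, k) θ
        = ((c j * (starRingEnd ℂ) (c k)) * Complex.exp ((((j:ℝ) - k : ℝ):ℂ) * θ * Complex.I)).re := by
      intro θ
      rw [uP]
      congr 1
      simp only [map_mul, hconjexp]
      simp only [eK]
      rw [mul_mul_mul_comm, ← Complex.exp_add]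
      congr 1
      push_cast; ring
    simp_rw [hrw]
    by_cases hjk : j = k
    · subst hjk
      rw [if_pos rfl]
      have h0 : ∀ θ : ℝ, ((((j:ℝ) - j : ℝ):ℂ) * θ * Complex.I) = 0 := by
        intro θ; simp
      simp_rw [h0, Complex.exp_zero, mul_one]
      rw [setIntegral_const, Real.volume_real_Ioo, smul_eq_mul,
        Complex.mul_conj, Complex.normSq_eq_norm_sq, Complex.ofReal_re,
        max_eq_left (by linarith [Real.pi_pos])]
      ring
    · rw [if_neg hjk]
      set n : ℤ := (j:ℤ) - k with hn
      have hnne : n ≠ 0 := by omega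
      have hcast : ((j:ℝ) - k : ℝ) = ((n:ℤ):ℝ) := by rw [hn]; push_cast; ring
      simp_rw [hcast]
      have hint : IntegrableOn
          (fun θ : ℝ => (c j * (starRingEnd ℂ) (c k)) * Complex.exp (((n:ℝ):ℂ) * θ * Complex.I))
          (Ioo (-Real.pi) Real.pi) := by
        have hcont : Continuous (fun θ : ℝ =>
            (c j * (starRingEnd ℂ) (c k)) * Complex.exp (((n:ℝ):ℂ) * θ * Complex.I)) :=
          continuous_const.mul (Complex.continuous_exp.comp
            ((continuous_const.mul Complex.continuous_ofReal).mul continuous_const))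
        exact IntegrableOn.mono_set hcont.integrableOn_Icc Ioo_subset_Icc_self
      rw [my_integral_re hint, integral_const_mul, exp_int_diff n hnne, mul_zero,
        Complex.zero_re]
  calc ∫ θ in Ioo (-Real.pi) Real.pi, ‖∑' k : ℕ, c k * eK k θ‖ ^ 2
      = ∫ θ in Ioo (-Real.pi) Real.pi, ∑' p : ℕ × ℕ, uP c p θ := by
        exact setIntegral_congr_fun measurableSet_Ioo fun θ _ => point θ
    _ = ∑' p : ℕ × ℕ, ∫ θ in Ioo (-Real.pi) Real.pi, uP c p θ := by
        apply integral_tsum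
        · exact fun p => ((ucont p).aestronglyMeasurable)
        · have hb : ∀ p : ℕ × ℕ, (∫⁻ θ in Ioo (-Real.pi) Real.pi, ‖uP c p θ‖₊)
              ≤ ENNReal.ofReal (‖c p.1‖ * ‖c p.2‖ * (2 * Real.pi)) := by
            intro p
            have hle : ∀ θ : ℝ, (‖uP c p θ‖₊ : ENNReal) ≤ ENNReal.ofReal (‖c p.1‖ * ‖c p.2‖) := by
              intro θ
              rw [← enorm_eq_nnnorm, ← ofReal_norm]
              exact ENNReal.ofReal_le_ofReal (normbound p θ)
            calc (∫⁻ θ in Ioo (-Real.pi) Real.pi, ‖uP c p θ‖₊)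
                ≤ ∫⁻ _ in Ioo (-Real.pi) Real.pi, ENNReal.ofReal (‖c p.1‖ * ‖c p.2‖) :=
                  lintegral_mono hle
              _ = ENNReal.ofReal (‖c p.1‖ * ‖c p.2‖) * volume (Ioo (-Real.pi) Real.pi) := by
                  rw [setLIntegral_const]
              _ = ENNReal.ofReal (‖c p.1‖ * ‖c p.2‖ * (2 * Real.pi)) := by
                  rw [Real.volume_Ioo, ← ENNReal.ofReal_mul (by positivity)]
                  congr 1; ring
          refine ne_top_of_le_ne_top ?_ (ENNReal.tsum_le_tsum hb)
          rw [← ENNReal.ofReal_tsum_of_nonneg (fun p => by positivity)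
            (prodsum.mul_right (2 * Real.pi))]
          exact ENNReal.ofReal_ne_top
    _ = ∑' p : ℕ × ℕ, (if p.1 = p.2 then ‖c p.1‖ ^ 2 * (2 * Real.pi) else 0) := tsum_congr hval
    _ = 2 * Real.pi * ∑' k : ℕ, ‖c k‖ ^ 2 := by
        have hDsum : Summable (fun p : ℕ × ℕ => if p.1 = p.2 then ‖c p.1‖ ^ 2 * (2 * Real.pi) else 0) := by
          refine Summable.of_nonneg_of_le (fun p => by positivity) (fun p => ?_)
            (prodsum.mul_right (2 * Real.pi))
          by_cases h : p.1 = p.2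
          · rw [if_pos h]; rw [← h]; rw [sq]
          · rw [if_neg h]; positivity
        rw [Summable.tsum_prod' hDsum (fun b => (hDsum.prod_factor b))]
        have hinner : ∀ j : ℕ, (∑' k : ℕ, if j = k then ‖c j‖ ^ 2 * (2 * Real.pi) else 0)
            = ‖c j‖ ^ 2 * (2 * Real.pi) := by
          intro j
          rw [tsum_eq_single j (fun k hk => if_neg (fun h => hk (h.symm)))]
          simp
        simp_rw [hinner]
        rw [tsum_mul_right]
        ring

section Inner

variable {r : ℝ} {x : ℂ} (hr : 1 ≤ r) (hx : ‖x‖ = r)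

include hr hx

lemma hx_ne : x ≠ 0 := by
  intro h
  rw [h, norm_zero] at hx
  linarith [hx ▸ hr]

lemma sub_ne {s : ℝ} (hs : s ∈ Ioo (0:ℝ) 1) (θ : ℝ) :
    x - (s:ℂ) * Complex.exp ((θ:ℂ) * Complex.I) ≠ 0 := by
  intro h
  rw [sub_eq_zero] at h
  have h2 : ‖x‖ = s := by
    rw [h, norm_mul, Complex.norm_exp_ofReal_mul_I, mul_one, Complex.norm_real,
      Real.norm_eq_abs, abs_of_pos hs.1]
  rw [hx] at h2
  have := hs.2
  linarith

lemma inner_integrable {s : ℝ} (hs : s ∈ Ioo (0:ℝ) 1) :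
    IntegrableOn (fun θ : ℝ => (‖x - (s:ℂ) * Complex.exp ((θ:ℂ) * Complex.I)‖)⁻¹)
      (Ioo (-Real.pi) Real.pi) := by
  have hcont0 : Continuous (fun θ : ℝ => ‖x - (s:ℂ) * Complex.exp ((θ:ℂ) * Complex.I)‖) :=
    continuous_norm.comp (continuous_const.sub
      (continuous_const.mul (Complex.continuous_exp.comp
        (Complex.continuous_ofReal.mul continuous_const))))
  have hcont : Continuous (fun θ : ℝ =>
      (‖x - (s:ℂ) * Complex.exp ((θ:ℂ) * Complex.I)‖)⁻¹) := by
    apply hcont0.inv₀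
    intro θ
    exact norm_ne_zero_iff.mpr (sub_ne hr hx hs θ)
  exact IntegrableOn.mono_set hcont.integrableOn_Icc Ioo_subset_Icc_self

lemma inner_val {s : ℝ} (hs : s ∈ Ioo (0:ℝ) 1) :
    ∫ θ in Ioo (-Real.pi) Real.pi,
        (‖x - (s:ℂ) * Complex.exp ((θ:ℂ) * Complex.I)‖)⁻¹
      = 2 * Real.pi * r⁻¹ * ∑' k : ℕ, aW k ^ 2 * (s / r) ^ (2 * k) := by
  have hx0 : x ≠ 0 := hx_ne hr hx
  have hr0 : (0:ℝ) < r := lt_of_lt_of_le one_pos hr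
  have hsr : s / r < 1 := by
    rw [div_lt_one hr0]
    linarith [hs.2]
  have hsr0 : 0 ≤ s / r := div_nonneg hs.1.le hr0.le
  set c : ℕ → ℂ := fun k => (aW k : ℂ) * ((s:ℂ) / x) ^ k with hcdef
  have hnormc : ∀ k, ‖c k‖ = aW k * (s / r) ^ k := by
    intro k
    rw [hcdef]
    simp only [norm_mul, norm_pow, norm_div, Complex.norm_real, hx,
      Real.norm_eq_abs]
    rw [abs_of_pos (aW_pos k), abs_of_pos hs.1, div_pow]
  have hcs : Summable fun k => ‖c k‖ := by
    simp_rw [hnormc]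
    refine Summable.of_nonneg_of_le
      (fun k => mul_nonneg (aW_pos k).le (by positivity)) (fun k => ?_)
      (summable_geometric_of_lt_one hsr0 hsr)
    exact mul_le_of_le_one_left (by positivity) (aW_le_one k)
  have key : ∀ θ : ℝ, (‖x - (s:ℂ) * Complex.exp ((θ:ℂ) * Complex.I)‖)⁻¹
      = r⁻¹ * ‖∑' k : ℕ, c k * eK k θ‖ ^ 2 := by
    intro θ
    have hw : ‖((s:ℂ) * Complex.exp ((θ:ℂ) * Complex.I)) / x‖ < 1 := by
      rw [norm_div, norm_mul,
        Complex.norm_exp_ofReal_mul_I, mul_one, hx, Complex.norm_real, Real.norm_eq_abs,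
        abs_of_pos hs.1]
      exact hsr
    have hfac : x - (s:ℂ) * Complex.exp ((θ:ℂ) * Complex.I)
        = x * (1 - ((s:ℂ) * Complex.exp ((θ:ℂ) * Complex.I)) / x) := by
      field_simp
    rw [hfac, norm_mul, hx, mul_inv]
    congr 1
    rw [aW_norm_series hw]
    congr 2
    apply tsum_congr
    intro k
    rw [hcdef]
    simp only [eK]
    have hexp : Complex.exp ((k:ℂ) * (θ:ℂ) * Complex.I) = Complex.exp ((θ:ℂ) * Complex.I) ^ k := by
      rw [mul_assoc, Complex.exp_nat_mul]
    rw [hexp]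
    ring
  calc ∫ θ in Ioo (-Real.pi) Real.pi,
        (‖x - (s:ℂ) * Complex.exp ((θ:ℂ) * Complex.I)‖)⁻¹
      = ∫ θ in Ioo (-Real.pi) Real.pi, r⁻¹ * ‖∑' k : ℕ, c k * eK k θ‖ ^ 2 :=
        setIntegral_congr_fun measurableSet_Ioo fun θ _ => key θ
    _ = r⁻¹ * ∫ θ in Ioo (-Real.pi) Real.pi, ‖∑' k : ℕ, c k * eK k θ‖ ^ 2 :=
        integral_const_mul _ _
    _ = r⁻¹ * (2 * Real.pi * ∑' k : ℕ, ‖c k‖ ^ 2) := by rw [parseval c hcs]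
    _ = 2 * Real.pi * r⁻¹ * ∑' k : ℕ, aW k ^ 2 * (s / r) ^ (2 * k) := by
        have : ∀ k : ℕ, ‖c k‖ ^ 2 = aW k ^ 2 * (s / r) ^ (2 * k) := by
          intro k
          rw [hnormc, mul_pow, ← pow_mul, mul_comm k 2]
        rw [tsum_congr this]
        ring

end Inner

lemma radial_intOn (C : ℝ) (k : ℕ) :
    IntegrableOn (fun s : ℝ => C * s ^ (2*k+1)) (Ioo (0:ℝ) 1) :=
  (continuous_const.mul (continuous_pow _)).integrableOn_Icc.mono_set Ioo_subset_Icc_self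

lemma radial_val (C : ℝ) (k : ℕ) :
    ∫ s in Ioo (0:ℝ) 1, C * s ^ (2*k+1) = C / (2*(k:ℝ)+2) := by
  rw [MeasureTheory.integral_const_mul, ← MeasureTheory.integral_Ioc_eq_integral_Ioo,
    ← intervalIntegral.integral_of_le (zero_le_one), integral_pow]
  have hcast : ((2*k+1 : ℕ):ℝ) + 1 = 2*(k:ℝ)+2 := by push_cast; ring
  rw [one_pow, zero_pow (by omega : 2*k+1+1 ≠ 0), hcast]
  ring

lemma radial_lint' (C : ℝ) (hC : 0 ≤ C) (k : ℕ) :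
    (∫⁻ s in Ioo (0:ℝ) 1, ENNReal.ofReal (C * s ^ (2*k+1)))
      = ENNReal.ofReal (C / (2*(k:ℝ)+2)) := by
  calc (∫⁻ s in Ioo (0:ℝ) 1, ENNReal.ofReal (C * s ^ (2*k+1)))
      = ENNReal.ofReal (∫ s in Ioo (0:ℝ) 1, C * s ^ (2*k+1)) := by
        refine (ofReal_integral_eq_lintegral_ofReal (radial_intOn C k) ?_).symm
        filter_upwards [ae_restrict_mem measurableSet_Ioo] with s hs
        have := hs.1
        positivity
    _ = ENNReal.ofReal (C / (2*(k:ℝ)+2)) := by rw [radial_val]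

lemma radial_lint (C : ℝ) (hC : 0 ≤ C) (k : ℕ) :
    (∫⁻ s in Ioo (0:ℝ) 1, ‖C * s ^ (2*k+1)‖₊) = ENNReal.ofReal (C / (2*(k:ℝ)+2)) := by
  calc (∫⁻ s in Ioo (0:ℝ) 1, ‖C * s ^ (2*k+1)‖₊)
      = ∫⁻ s in Ioo (0:ℝ) 1, ENNReal.ofReal (C * s ^ (2*k+1)) := by
        apply setLIntegral_congr_fun measurableSet_Ioo
        intro s hs
        dsimp only
        rw [← enorm_eq_nnnorm, ← ofReal_norm,
          Real.norm_of_nonneg (mul_nonneg hC (pow_nonneg hs.1.le _))]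
    _ = ENNReal.ofReal (C / (2*(k:ℝ)+2)) := radial_lint' C hC k

/-- For `r ≥ 1` and `|x| = r`,
`∫_𝔻 |x − y|⁻¹ dy = 2π Σ_k (binom(2k,k)/4^k)² (1/(2k+2)) r^{−(2k+1)}`. -/
theorem stmt6 (r : ℝ) (hr : 1 ≤ r) (x : ℂ) (hx : ‖x‖ = r) :
    ∫ y in ball (0 : ℂ) 1, ‖x - y‖⁻¹ =
      2 * Real.pi * ∑' k : ℕ,
        ((Nat.choose (2 * k) k : ℝ) / 4 ^ k) ^ 2 *
          (1 / (2 * (k : ℝ) + 2)) * (r ^ (2 * k + 1))⁻¹ := by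
  have hr0 : (0:ℝ) < r := lt_of_lt_of_le one_pos hr
  have hπ := Real.pi_pos
  set C : ℕ → ℝ := fun k => 2 * Real.pi * r⁻¹ * (aW k ^ 2 * (r⁻¹) ^ (2*k)) with hCdef
  have hC0 : ∀ k, 0 ≤ C k := by
    intro k
    have := aW_pos k
    rw [hCdef]
    positivity
  have h2r : (r⁻¹ : ℝ) ≤ 1 := by
    rw [inv_le_one_iff₀]; right; exact hr
  have h3r : ∀ k : ℕ, (r⁻¹ : ℝ) ^ (2*k) ≤ 1 := fun k => pow_le_one₀ (by positivity) h2r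
  have hCk2 : ∀ k : ℕ, C k ≤ 2 * Real.pi * (1 / (2*(k:ℝ)+1)) := by
    intro k
    have h1 : aW k ^ 2 ≤ 1 / (2*(k:ℝ)+1) := by
      rw [le_div_iff₀ (by positivity)]
      exact aW_sq k
    have key1 : r⁻¹ * (aW k^2 * (r⁻¹)^(2*k)) ≤ aW k^2 := by
      have t1 : aW k^2 * (r⁻¹)^(2*k) ≤ aW k^2 :=
        mul_le_of_le_one_right (sq_nonneg _) (h3r k)
      have t2 : r⁻¹ * (aW k^2 * (r⁻¹)^(2*k)) ≤ 1 * (aW k^2 * (r⁻¹)^(2*k)) :=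
        mul_le_mul_of_nonneg_right h2r (by positivity)
      calc r⁻¹ * (aW k^2 * (r⁻¹)^(2*k)) ≤ 1 * (aW k^2*(r⁻¹)^(2*k)) := t2
        _ = aW k^2*(r⁻¹)^(2*k) := one_mul _
        _ ≤ aW k^2 := t1
    calc C k = 2 * Real.pi * (r⁻¹ * (aW k^2 * (r⁻¹)^(2*k))) := by rw [hCdef]; ring
      _ ≤ 2 * Real.pi * (aW k^2) := mul_le_mul_of_nonneg_left key1 (by positivity)
      _ ≤ 2 * Real.pi * (1/(2*(k:ℝ)+1)) := mul_le_mul_of_nonneg_left h1 (by positivity)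
  have hCle : ∀ k, C k ≤ 2 * Real.pi := by
    intro k
    refine (hCk2 k).trans ?_
    have : 1 / (2*(k:ℝ)+1) ≤ 1 := by
      rw [div_le_one (by positivity)]
      linarith [Nat.cast_nonneg (α := ℝ) k]
    calc 2 * Real.pi * (1/(2*(k:ℝ)+1)) ≤ 2 * Real.pi * 1 :=
          mul_le_mul_of_nonneg_left this (by positivity)
      _ = 2 * Real.pi := mul_one _
  have hCs : Summable (fun k : ℕ => C k / (2*(k:ℝ)+2)) := by
    have hmaj : Summable (fun k : ℕ => 2 * Real.pi * (1 / ((k:ℝ)+1)^2)) := by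
      have h := (summable_nat_add_iff 1).mpr
        ((Real.summable_one_div_nat_pow (p := 2)).mpr (by norm_num))
      simp only [Nat.cast_add, Nat.cast_one] at h
      exact h.mul_left _
    refine Summable.of_nonneg_of_le (fun k => by positivity) (fun k => ?_) hmaj
    calc C k / (2*(k:ℝ)+2) ≤ (2 * Real.pi * (1/(2*(k:ℝ)+1))) / (2*(k:ℝ)+2) := by
          gcongr
          exact hCk2 k
      _ = 2 * Real.pi * (1/((2*(k:ℝ)+1)*(2*(k:ℝ)+2))) := by
          field_simp
      _ ≤ 2 * Real.pi * (1 / ((k:ℝ)+1)^2) := by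
          refine mul_le_mul_of_nonneg_left ?_ (by positivity)
          refine one_div_le_one_div_of_le (by positivity) ?_
          nlinarith [Nat.cast_nonneg (α := ℝ) k]
  
  -- main body
  have hx0 : x ≠ 0 := hx_ne hr hx
  set G : ℝ × ℝ → ℝ := fun p => (Ioo (0:ℝ) 1).indicator (fun s => s) p.1 *
    (‖x - (p.1:ℂ) * Complex.exp ((p.2:ℂ) * Complex.I)‖)⁻¹ with hGdef
  have hGnonneg : ∀ p, 0 ≤ G p := fun p =>
    mul_nonneg (Set.indicator_nonneg (fun s hs => hs.1.le) _)
      (inv_nonneg.mpr (norm_nonneg _))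
  have habs_cont : Continuous (fun p : ℝ × ℝ =>
      ‖x - (p.1:ℂ) * Complex.exp ((p.2:ℂ) * Complex.I)‖) :=
    continuous_norm.comp (continuous_const.sub
      ((Complex.continuous_ofReal.comp continuous_fst).mul
        (Complex.continuous_exp.comp
          ((Complex.continuous_ofReal.comp continuous_snd).mul continuous_const))))
  have hGmeas0 : Measurable G :=
    (((measurable_id.indicator measurableSet_Ioo).comp measurable_fst).mul
      habs_cont.measurable.inv)
  have hsliceG : ∀ s ∈ Ioo (0:ℝ) 1, ∀ θ : ℝ,
      G (s, θ) = s * (‖x - (s:ℂ) * Complex.exp ((θ:ℂ) * Complex.I)‖)⁻¹ := by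
    intro s hs θ
    rw [hGdef]
    simp [Set.indicator_of_mem hs]
  have hslice0 : ∀ s : ℝ, s ∉ Ioo (0:ℝ) 1 → ∀ θ : ℝ, G (s, θ) = 0 := by
    intro s hs θ
    rw [hGdef]
    simp [Set.indicator_of_notMem hs]
  have hslice_int : ∀ s : ℝ, Integrable (fun θ => G (s, θ))
      (volume.restrict (Ioo (-Real.pi) Real.pi)) := by
    intro s
    by_cases hs : s ∈ Ioo (0:ℝ) 1
    · have h : (fun θ => G (s, θ)) = fun θ : ℝ =>
          s * (‖x - (s:ℂ) * Complex.exp ((θ:ℂ) * Complex.I)‖)⁻¹ :=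
        funext (hsliceG s hs)
      rw [h]
      exact (inner_integrable hr hx hs).const_mul s
    · have h : (fun θ => G (s, θ)) = fun _ => 0 := funext (hslice0 s hs)
      rw [h]
      exact integrable_zero _ _ _
  have hslice_val : ∀ s ∈ Ioo (0:ℝ) 1,
      ∫ θ in Ioo (-Real.pi) Real.pi, G (s, θ) = ∑' k : ℕ, C k * s ^ (2*k+1) := by
    intro s hs
    rw [setIntegral_congr_fun measurableSet_Ioo (fun θ _ => hsliceG s hs θ),
      MeasureTheory.integral_const_mul, inner_val hr hx hs]
    have h1 : ∀ k : ℕ, C k * s ^ (2*k+1)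
        = (s * (2 * Real.pi * r⁻¹)) * (aW k ^ 2 * (s/r) ^ (2*k)) := by
      intro k
      rw [hCdef, div_eq_mul_inv, mul_pow]
      ring
    rw [tsum_congr h1, tsum_mul_left]
    ring
  have hsummC : ∀ s ∈ Ioo (0:ℝ) 1, Summable (fun k : ℕ => C k * s ^ (2*k+1)) := by
    intro s hs
    refine Summable.of_nonneg_of_le
      (fun k => mul_nonneg (hC0 k) (pow_nonneg hs.1.le _)) (fun k => ?_)
      ((summable_geometric_of_lt_one (by positivity : (0:ℝ) ≤ s^2)
        (by nlinarith [hs.1, hs.2] : s^2 < 1)).mul_left (2 * Real.pi * s))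
    have hsp : s ^ (2*k+1) = (s^2)^k * s := by
      rw [pow_succ, pow_mul]
    calc C k * s ^ (2*k+1) ≤ 2 * Real.pi * s ^ (2*k+1) :=
          mul_le_mul_of_nonneg_right (hCle k) (pow_nonneg hs.1.le _)
      _ = 2 * Real.pi * s * (s^2)^k := by rw [hsp]; ring
  have hint_inner : ∀ s : ℝ, (∫⁻ θ in Ioo (-Real.pi) Real.pi, ‖G (s, θ)‖₊)
      = ENNReal.ofReal (∫ θ in Ioo (-Real.pi) Real.pi, G (s, θ)) := by
    intro s
    calc (∫⁻ θ in Ioo (-Real.pi) Real.pi, ‖G (s, θ)‖₊)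
        = ∫⁻ θ in Ioo (-Real.pi) Real.pi, ENNReal.ofReal (G (s, θ)) :=
          lintegral_congr fun θ => by
            rw [← enorm_eq_nnnorm, ← ofReal_norm, Real.norm_of_nonneg (hGnonneg _)]
      _ = ENNReal.ofReal (∫ θ in Ioo (-Real.pi) Real.pi, G (s, θ)) :=
          (ofReal_integral_eq_lintegral_ofReal (hslice_int s)
            (ae_of_all _ fun θ => hGnonneg _)).symm
  have hinner_ind : ∀ s : ℝ, (∫ θ in Ioo (-Real.pi) Real.pi, G (s, θ))
      = (Ioo (0:ℝ) 1).indicator (fun s' => ∑' k : ℕ, C k * s' ^ (2*k+1)) s := by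
    intro s
    by_cases hs : s ∈ Ioo (0:ℝ) 1
    · rw [Set.indicator_of_mem hs, hslice_val s hs]
    · rw [Set.indicator_of_notMem hs,
        setIntegral_congr_fun measurableSet_Ioo (fun θ _ => hslice0 s hs θ),
        integral_zero]
  have hradial_sum : (∑' k : ℕ, ∫⁻ s in Ioo (0:ℝ) 1, ‖C k * s ^ (2*k+1)‖₊)
      = ENNReal.ofReal (∑' k : ℕ, C k / (2*(k:ℝ)+2)) := by
    rw [tsum_congr (fun k => radial_lint (C k) (hC0 k) k),
      ← ENNReal.ofReal_tsum_of_nonneg (fun k => div_nonneg (hC0 k) (by positivity)) hCs]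
  have hlint : (∫⁻ s in Ioi (0:ℝ), ∫⁻ θ in Ioo (-Real.pi) Real.pi, ‖G (s, θ)‖₊) ≠ ⊤ := by
    have heq : (∫⁻ s in Ioi (0:ℝ), ∫⁻ θ in Ioo (-Real.pi) Real.pi, ‖G (s, θ)‖₊)
        = ENNReal.ofReal (∑' k : ℕ, C k / (2*(k:ℝ)+2)) := by
      calc (∫⁻ s in Ioi (0:ℝ), ∫⁻ θ in Ioo (-Real.pi) Real.pi, ‖G (s, θ)‖₊)
          = ∫⁻ s in Ioi (0:ℝ), (Ioo (0:ℝ) 1).indicator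
              (fun s' => ENNReal.ofReal (∑' k : ℕ, C k * s' ^ (2*k+1))) s := by
            apply lintegral_congr
            intro s
            rw [hint_inner s, hinner_ind s]
            by_cases hs : s ∈ Ioo (0:ℝ) 1
            · rw [Set.indicator_of_mem hs, Set.indicator_of_mem hs]
            · rw [Set.indicator_of_notMem hs, Set.indicator_of_notMem hs,
                ENNReal.ofReal_zero]
        _ = ∫⁻ s in Ioo (0:ℝ) 1, ENNReal.ofReal (∑' k : ℕ, C k * s ^ (2*k+1)) := by
            rw [lintegral_indicator measurableSet_Ioo,
              Measure.restrict_restrict measurableSet_Ioo,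
              inter_eq_self_of_subset_left Ioo_subset_Ioi_self]
        _ = ∫⁻ s in Ioo (0:ℝ) 1, ∑' k : ℕ, ENNReal.ofReal (C k * s ^ (2*k+1)) := by
            apply setLIntegral_congr_fun measurableSet_Ioo
            intro s hs
            dsimp only
            rw [ENNReal.ofReal_tsum_of_nonneg
              (fun k => mul_nonneg (hC0 k) (pow_nonneg hs.1.le _)) (hsummC s hs)]
        _ = ∑' k : ℕ, ∫⁻ s in Ioo (0:ℝ) 1, ENNReal.ofReal (C k * s ^ (2*k+1)) :=
            lintegral_tsum fun k =>
              ((continuous_const.mul (continuous_pow _)).measurable.ennreal_ofReal).aemeasurable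
        _ = ∑' k : ℕ, ENNReal.ofReal (C k / (2*(k:ℝ)+2)) :=
            tsum_congr fun k => radial_lint' (C k) (hC0 k) k
        _ = ENNReal.ofReal (∑' k : ℕ, C k / (2*(k:ℝ)+2)) :=
            (ENNReal.ofReal_tsum_of_nonneg
              (fun k => div_nonneg (hC0 k) (by positivity)) hCs).symm
    rw [heq]
    exact ENNReal.ofReal_ne_top
  have hGint : Integrable G
      ((volume.restrict (Ioi (0:ℝ))).prod (volume.restrict (Ioo (-Real.pi) Real.pi))) := by
    constructor
    · exact hGmeas0.aestronglyMeasurable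
    · rw [HasFiniteIntegral]
      rw [lintegral_prod _ (hGmeas0.aestronglyMeasurable.enorm)]
      exact lt_top_iff_ne_top.mpr hlint
  calc ∫ y in ball (0:ℂ) 1, (‖x - y‖)⁻¹
      = ∫ p in polarCoord.target,
          p.1 • (ball (0:ℂ) 1).indicator (fun y => (‖x - y‖)⁻¹)
            (Complex.polarCoord.symm p) := by
        rw [← integral_indicator measurableSet_ball,
          ← Complex.integral_comp_polarCoord_symm]
    _ = ∫ p in Ioi (0:ℝ) ×ˢ Ioo (-Real.pi) Real.pi, G p := by
        rw [← polarCoord_target]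
        apply setIntegral_congr_fun polarCoord.open_target.measurableSet
        intro p hp
        rw [polarCoord_target] at hp
        have hp1 : 0 < p.1 := hp.1
        have hsymm : Complex.polarCoord.symm p
            = (p.1:ℂ) * Complex.exp ((p.2:ℂ) * Complex.I) := by
          rw [Complex.polarCoord_symm_apply, Complex.exp_mul_I,
            Complex.ofReal_cos, Complex.ofReal_sin]
        have habs : ‖Complex.polarCoord.symm p‖ = p.1 := by
          rw [Complex.norm_polarCoord_symm, abs_of_pos hp1]
        simp only [smul_eq_mul, hGdef]
        by_cases h1 : p.1 < 1
        · have hball : Complex.polarCoord.symm p ∈ ball (0:ℂ) 1 := by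
            rw [mem_ball_zero_iff, habs]
            exact h1
          rw [Set.indicator_of_mem hball, Set.indicator_of_mem (mem_Ioo.mpr ⟨hp1, h1⟩),
            hsymm]
        · have hball : Complex.polarCoord.symm p ∉ ball (0:ℂ) 1 := by
            rw [mem_ball_zero_iff, habs]
            exact h1
          rw [Set.indicator_of_notMem hball,
            Set.indicator_of_notMem (fun hm => h1 (mem_Ioo.mp hm).2), mul_zero, zero_mul]
    _ = ∫ s in Ioi (0:ℝ), ∫ θ in Ioo (-Real.pi) Real.pi, G (s, θ) := by
        rw [Measure.volume_eq_prod, ← Measure.prod_restrict, integral_prod _ hGint]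
    _ = ∫ s in Ioi (0:ℝ), (Ioo (0:ℝ) 1).indicator
          (fun s' => ∑' k : ℕ, C k * s' ^ (2*k+1)) s :=
        integral_congr_ae (ae_of_all _ fun s => hinner_ind s)
    _ = ∫ s in Ioo (0:ℝ) 1, ∑' k : ℕ, C k * s ^ (2*k+1) := by
        rw [integral_indicator measurableSet_Ioo,
          Measure.restrict_restrict measurableSet_Ioo,
          inter_eq_self_of_subset_left Ioo_subset_Ioi_self]
    _ = ∑' k : ℕ, ∫ s in Ioo (0:ℝ) 1, C k * s ^ (2*k+1) := by
        apply integral_tsum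
        · exact fun k => (continuous_const.mul (continuous_pow _)).aestronglyMeasurable
        · change (∑' k : ℕ, ∫⁻ s in Ioo (0:ℝ) 1, ‖C k * s ^ (2*k+1)‖₊) ≠ ⊤
          rw [hradial_sum]
          exact ENNReal.ofReal_ne_top
    _ = ∑' k : ℕ, C k / (2*(k:ℝ)+2) := tsum_congr fun k => radial_val (C k) k
    _ = 2 * Real.pi * ∑' k : ℕ,
          ((Nat.choose (2 * k) k : ℝ) / 4 ^ k) ^ 2 *
            (1 / (2 * (k : ℝ) + 2)) * (r ^ (2 * k + 1))⁻¹ := by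
        rw [← tsum_mul_left]
        apply tsum_congr
        intro k
        have h4 : ((Nat.choose (2 * k) k : ℝ) / 4 ^ k) = aW k := rfl
        have h5 : (r ^ (2*k+1) : ℝ)⁻¹ = r⁻¹ * (r⁻¹)^(2*k) := by
          rw [← inv_pow, pow_succ']
        rw [h4, h5]
        simp only [hCdef]
        ring
end

section
/- Let ν ∈ (0,1] and define U : (1,∞) → ℝ by U(r) = −∫_𝔻 |r − y|^{−ν} dy, where r ∈ ℝ ⊂ ℂ and the integral is over the open unit disk with respect to planar Lebesgue measure. Then U is differentiable on (1,∞) and U'(r) > 0 for every r > 1. -/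
open Metric MeasureTheory

lemma aux_deriv (ν : ℝ) (a : ℂ) (x : ℝ) (hx : 0 < ‖(x : ℂ) - a‖) :
    HasDerivAt (fun t : ℝ => ‖(t : ℂ) - a‖ ^ (-ν))
      (-ν * ‖(x : ℂ) - a‖ ^ (-ν - 2) * (x - a.re)) x := by
  have habs : ∀ t : ℝ, ‖(t : ℂ) - a‖ = Real.sqrt ((t - a.re) ^ 2 + a.im ^ 2) := by
    intro t
    rw [Complex.norm_def, Complex.normSq_apply]
    congr 1
    simp [Complex.sub_re, Complex.sub_im]
    ring
  have hq : 0 < (x - a.re) ^ 2 + a.im ^ 2 := by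
    have := habs x ▸ hx
    nlinarith [Real.sq_sqrt (by positivity : (0:ℝ) ≤ (x - a.re) ^ 2 + a.im ^ 2),
      Real.sqrt_nonneg ((x - a.re) ^ 2 + a.im ^ 2)]
  set s := Real.sqrt ((x - a.re) ^ 2 + a.im ^ 2) with hs
  have hspos : 0 < s := Real.sqrt_pos.mpr hq
  have h1 : HasDerivAt (fun t : ℝ => (t - a.re) ^ 2 + a.im ^ 2) (2 * (x - a.re)) x := by
    have := (((hasDerivAt_id x).sub_const a.re).pow 2).add_const (a.im ^ 2)
    simpa using this
  have h2 : HasDerivAt (fun t : ℝ => Real.sqrt ((t - a.re) ^ 2 + a.im ^ 2))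
      (1 / (2 * s) * (2 * (x - a.re))) x :=
    (Real.hasDerivAt_sqrt hq.ne').comp x h1
  have h3 : HasDerivAt (fun t : ℝ => Real.sqrt ((t - a.re) ^ 2 + a.im ^ 2) ^ (-ν))
      (-ν * s ^ (-ν - 1) * (1 / (2 * s) * (2 * (x - a.re)))) x :=
    (Real.hasDerivAt_rpow_const (Or.inl hspos.ne')).comp
      (h := fun t : ℝ => Real.sqrt ((t - a.re) ^ 2 + a.im ^ 2)) x h2
  have heq : -ν * s ^ (-ν - 1) * (1 / (2 * s) * (2 * (x - a.re)))
      = -ν * s ^ (-ν - 2) * (x - a.re) := by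
    have : s ^ (-ν - 2) = s ^ (-ν - 1) / s := by
      rw [← Real.rpow_sub_one hspos.ne']
      ring_nf
    rw [this]
    field_simp
  have := heq ▸ h3
  simp_rw [← habs] at this
  rw [habs x]
  exact this

/-- For `ν ∈ (0,1]`, the potential `U(r) = −∫_𝔻 |r − y|^{−ν} dy` is differentiable on
`(1,∞)` with `U' > 0` there. -/
theorem stmt7 (ν : ℝ) (hν : ν ∈ Set.Ioc (0 : ℝ) 1)
    (U : ℝ → ℝ)
    (hU : ∀ r : ℝ, U r = -∫ y in ball (0 : ℂ) 1, ‖(r : ℂ) - y‖ ^ (-ν)) :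
    ∀ r : ℝ, 1 < r → DifferentiableAt ℝ U r ∧ 0 < deriv U r := by
  obtain ⟨hν0, hν1⟩ := hν
  intro r hr
  set ε : ℝ := (r - 1) / 2 with hε
  have hεpos : 0 < ε := by rw [hε]; linarith
  set F : ℝ → ℂ → ℝ := fun x a => ‖(x : ℂ) - a‖ ^ (-ν) with hFdef
  set F' : ℝ → ℂ → ℝ :=
    fun x a => -ν * ‖(x : ℂ) - a‖ ^ (-ν - 2) * (x - a.re) with hF'def
  -- basic bounds
  have habslt : ∀ a ∈ ball (0 : ℂ) 1, ‖a‖ < 1 := fun a ha => by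
    simpa using mem_ball_zero_iff.mp ha
  have hlow : ∀ (x : ℝ), ∀ a ∈ ball (0 : ℂ) 1, x - 1 ≤ ‖(x : ℂ) - a‖ := by
    intro x a ha
    have h2 : ‖(x : ℂ)‖ ≤ ‖(x : ℂ) - a‖ + ‖a‖ := by
      simpa using norm_add_le ((x : ℂ) - a) a
    have h3 : x ≤ ‖(x : ℂ)‖ := by
      rw [Complex.norm_real, Real.norm_eq_abs]; exact le_abs_self x
    have := habslt a ha
    linarith
  have hhigh : ∀ (x : ℝ), 0 ≤ x → ∀ a ∈ ball (0 : ℂ) 1,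
      ‖(x : ℂ) - a‖ ≤ x + 1 := by
    intro x hx a ha
    have h2 : ‖(x : ℂ) - a‖ ≤ ‖(x : ℂ)‖ + ‖a‖ :=
      norm_sub_le _ _
    rw [Complex.norm_real, Real.norm_eq_abs, abs_of_nonneg hx] at h2
    have := habslt a ha
    linarith
  have hballx : ∀ x ∈ ball r ε, (r + 1) / 2 < x := by
    intro x hx
    rw [Real.ball_eq_Ioo] at hx
    have := hx.1
    rw [hε] at this
    linarith
  -- measurability
  have hmeas : ∀ x : ℝ, 1 < x →
      AEStronglyMeasurable (F x) (volume.restrict (ball (0 : ℂ) 1)) := by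
    intro x hx
    apply ContinuousOn.aestronglyMeasurable _ measurableSet_ball
    intro a ha
    apply ContinuousAt.continuousWithinAt
    apply ContinuousAt.rpow_const
    · exact (continuous_norm.comp (continuous_const.sub continuous_id)).continuousAt
    · left
      have := hlow x a ha
      exact ne_of_gt (by linarith)
  have hmeas' : AEStronglyMeasurable (F' r) (volume.restrict (ball (0 : ℂ) 1)) := by
    apply ContinuousOn.aestronglyMeasurable _ measurableSet_ball
    intro a ha
    apply ContinuousAt.continuousWithinAt
    apply ContinuousAt.mul
    · apply ContinuousAt.mul continuousAt_const
      apply ContinuousAt.rpow_const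
      · exact (continuous_norm.comp (continuous_const.sub continuous_id)).continuousAt
      · left
        have := hlow r a ha
        exact ne_of_gt (by linarith)
    · exact (continuous_const.sub Complex.continuous_re).continuousAt
  -- integrability of F r
  have hFint : Integrable (F r) (volume.restrict (ball (0 : ℂ) 1)) := by
    apply Integrable.mono' (g := fun _ => (r - 1) ^ (-ν))
      (integrableOn_const measure_ball_lt_top.ne) (hmeas r hr)
    rw [ae_restrict_iff' measurableSet_ball]
    apply ae_of_all
    intro a ha
    have h1 := hlow r a ha
    have h2 : (0:ℝ) < r - 1 := by linarith
    rw [hFdef, Real.norm_eq_abs, abs_of_nonneg (Real.rpow_nonneg (norm_nonneg _) _)]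
    exact Real.rpow_le_rpow_of_nonpos h2 h1 (by linarith)
  -- derivative bound
  have hbound : ∀ᵐ a ∂(volume.restrict (ball (0 : ℂ) 1)), ∀ x ∈ ball r ε,
      ‖F' x a‖ ≤ ν * ε ^ (-ν - 1) := by
    rw [ae_restrict_iff' measurableSet_ball]
    apply ae_of_all
    intro a ha x hx
    have hxgt := hballx x hx
    set s := ‖(x : ℂ) - a‖ with hsdef
    have hεs : ε ≤ s := by
      have h := hlow x a ha
      have h2 : ε = (r - 1) / 2 := hε
      linarith
    have hspos : 0 < s := lt_of_lt_of_le hεpos hεs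
    have hre : |x - a.re| ≤ s := by
      have := Complex.abs_re_le_norm ((x : ℂ) - a)
      simpa [Complex.sub_re] using this
    have hnorm : ‖F' x a‖ = ν * s ^ (-ν - 2) * |x - a.re| := by
      rw [hF'def, Real.norm_eq_abs, abs_mul, abs_mul, abs_neg, abs_of_nonneg hν0.le,
        abs_of_nonneg (Real.rpow_nonneg hspos.le _)]
    rw [hnorm]
    have step1 : ν * s ^ (-ν - 2) * |x - a.re| ≤ ν * s ^ (-ν - 2) * s := by
      apply mul_le_mul_of_nonneg_left hre
      positivity
    have step2 : ν * s ^ (-ν - 2) * s = ν * s ^ (-ν - 1) := by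
      rw [mul_assoc, ← Real.rpow_add_one hspos.ne']
      ring_nf
    have step3 : s ^ (-ν - 1) ≤ ε ^ (-ν - 1) :=
      Real.rpow_le_rpow_of_nonpos hεpos hεs (by linarith)
    calc ν * s ^ (-ν - 2) * |x - a.re| ≤ ν * s ^ (-ν - 1) := by rw [← step2]; exact step1
      _ ≤ ν * ε ^ (-ν - 1) := mul_le_mul_of_nonneg_left step3 hν0.le
  -- differentiability of integrand
  have hdiff : ∀ᵐ a ∂(volume.restrict (ball (0 : ℂ) 1)), ∀ x ∈ ball r ε,
      HasDerivAt (F · a) (F' x a) x := by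
    rw [ae_restrict_iff' measurableSet_ball]
    apply ae_of_all
    intro a ha x hx
    have hxgt := hballx x hx
    have hpos : 0 < ‖(x : ℂ) - a‖ := by
      have := hlow x a ha
      have : (0:ℝ) < x - 1 := by linarith
      linarith [hlow x a ha]
    exact aux_deriv ν a x hpos
  have hFmeas : ∀ᶠ x in nhds r, AEStronglyMeasurable (F x) (volume.restrict (ball (0 : ℂ) 1)) :=
    (eventually_gt_nhds hr).mono fun x hx => hmeas x hx
  obtain ⟨hint', hderiv⟩ := hasDerivAt_integral_of_dominated_loc_of_deriv_le (ball_mem_nhds r hεpos) hFmeas hFint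
    hmeas' hbound (integrableOn_const measure_ball_lt_top.ne) hdiff
  have hUeq : U = fun x => -∫ a in ball (0 : ℂ) 1, F x a := funext fun x => hU x
  have hU' : HasDerivAt U (-∫ a in ball (0 : ℂ) 1, F' r a) r := by
    rw [hUeq]; exact hderiv.neg
  refine ⟨hU'.differentiableAt, ?_⟩
  rw [hU'.deriv]
  rw [← integral_neg]
  set c : ℝ := ν * (r + 1) ^ (-ν - 2) * (r - 1) with hc
  have hcpos : 0 < c := by
    rw [hc]
    have : (0:ℝ) < (r + 1) ^ (-ν - 2) := Real.rpow_pos_of_pos (by linarith) _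
    have h2 : (0:ℝ) < r - 1 := by linarith
    positivity
  have hpt : ∀ a ∈ ball (0 : ℂ) 1, c ≤ -(F' r a) := by
    intro a ha
    set s := ‖(r : ℂ) - a‖ with hsdef
    have hsle : s ≤ r + 1 := hhigh r (by linarith) a ha
    have hslow : r - 1 ≤ s := hlow r a ha
    have hspos : 0 < s := by linarith
    have hre : a.re < 1 := by
      have h1 := Complex.abs_re_le_norm a
      have h2 := habslt a ha
      have := le_abs_self a.re
      linarith
    have hneg : -(F' r a) = ν * s ^ (-ν - 2) * (r - a.re) := by
      rw [hF'def]; ring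
    rw [hneg, hc]
    have hA : (r + 1) ^ (-ν - 2) ≤ s ^ (-ν - 2) :=
      Real.rpow_le_rpow_of_nonpos hspos hsle (by linarith)
    have hB : r - 1 ≤ r - a.re := by linarith
    have h1 : ν * (r + 1) ^ (-ν - 2) ≤ ν * s ^ (-ν - 2) :=
      mul_le_mul_of_nonneg_left hA hν0.le
    apply mul_le_mul h1 hB (by linarith) (by positivity)
  have hge := setIntegral_ge_of_const_le measurableSet_ball measure_ball_lt_top.ne hpt hint'.neg
  have hvol : 0 < (volume (ball (0 : ℂ) 1)).toReal :=
    ENNReal.toReal_pos (measure_ball_pos volume (0 : ℂ) one_pos).ne' measure_ball_lt_top.ne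
  have : 0 < c * (volume (ball (0 : ℂ) 1)).toReal := mul_pos hcpos hvol
  rw [smul_eq_mul, measureReal_def] at hge
  linarith
end

section
/- Let ν ∈ (0,1] and define U : (1,∞) → ℝ by U(r) = −∫_𝔻 |r − y|^{−ν} dy, where r ∈ ℝ ⊂ ℂ and the integral is over the open unit disk with respect to planar Lebesgue measure. Then U is twice differentiable on (1,∞) and U''(r) < 0 for every r > 1. -/
open Metric MeasureTheory

namespace Stmt8Aux

noncomputable def pQ (r : ℝ) (y : ℂ) : ℝ := (r - y.re)^2 + y.im^2

noncomputable def f0 (ν r : ℝ) (y : ℂ) : ℝ := pQ r y ^ (-ν/2)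
noncomputable def f1 (ν r : ℝ) (y : ℂ) : ℝ := (-ν * (r - y.re)) * pQ r y ^ (-(ν+2)/2)
noncomputable def f2 (ν r : ℝ) (y : ℂ) : ℝ :=
  ν*(ν+2)*(r - y.re)^2 * pQ r y ^ (-(ν+4)/2) - ν * pQ r y ^ (-(ν+2)/2)
noncomputable def g2 (ν r : ℝ) (y : ℂ) : ℝ :=
  ν*(ν+2)*y.im^2 * pQ r y ^ (-(ν+4)/2) - ν * pQ r y ^ (-(ν+2)/2)

lemma pQ_nonneg (r : ℝ) (y : ℂ) : 0 ≤ pQ r y := by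
  unfold pQ; positivity

lemma pQ_pos {r : ℝ} {y : ℂ} (h : y.re < r) : 0 < pQ r y := by
  have h1 : 0 < (r - y.re)^2 := by
    have := sub_pos.2 h; positivity
  have := sq_nonneg y.im
  unfold pQ; linarith

lemma abs_eq (ν r : ℝ) (y : ℂ) : ‖(r:ℂ) - y‖ ^ (-ν) = f0 ν r y := by
  rw [Complex.norm_def, Complex.normSq_apply]
  have h1 : ((r:ℂ) - y).re = r - y.re := by simp
  have h2 : ((r:ℂ) - y).im = -y.im := by simp
  rw [h1, h2]
  have hb : (r - y.re) * (r - y.re) + -y.im * -y.im = pQ r y := by unfold pQ; ring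
  rw [hb, Real.sqrt_eq_rpow, ← Real.rpow_mul (pQ_nonneg r y)]
  norm_num
  unfold f0
  ring_nf

lemma hasDerivAt_f0 {ν r : ℝ} {y : ℂ} (h : y.re < r) :
    HasDerivAt (fun x => f0 ν x y) (f1 ν r y) r := by
  have hQ : pQ r y ≠ 0 := (pQ_pos h).ne'
  have hq : HasDerivAt (fun x : ℝ => (x - y.re)^2 + y.im^2) (2*(r - y.re)) r := by
    have : HasDerivAt (fun x : ℝ => x - y.re) 1 r := (hasDerivAt_id r).sub_const _
    simpa using (this.pow 2).add_const (y.im^2)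
  have := hq.rpow_const (p := -ν/2) (Or.inl hQ)
  refine this.congr_deriv (Eq.symm ?_)
  have he : -ν/2 - 1 = -(ν+2)/2 := by ring
  unfold f1 pQ
  rw [← he]
  ring

lemma hasDerivAt_f1 {ν r : ℝ} {y : ℂ} (h : y.re < r) :
    HasDerivAt (fun x => f1 ν x y) (f2 ν r y) r := by
  have hQ : pQ r y ≠ 0 := (pQ_pos h).ne'
  have hq : HasDerivAt (fun x : ℝ => (x - y.re)^2 + y.im^2) (2*(r - y.re)) r := by
    have : HasDerivAt (fun x : ℝ => x - y.re) 1 r := (hasDerivAt_id r).sub_const _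
    simpa using (this.pow 2).add_const (y.im^2)
  have hp := hq.rpow_const (p := -(ν+2)/2) (Or.inl hQ)
  have hl : HasDerivAt (fun x : ℝ => -ν * (x - y.re)) (-ν) r := by
    have : HasDerivAt (fun x : ℝ => x - y.re) 1 r := (hasDerivAt_id r).sub_const _
    simpa using this.const_mul (-ν)
  have := hl.mul hp
  refine this.congr_deriv (Eq.symm ?_)
  have he : -(ν+2)/2 - 1 = -(ν+4)/2 := by ring
  unfold f2 pQ
  rw [← he]
  ring


/-- derivative in the imaginary direction: `φ(b) = -ν b ((r-a)²+b²)^(-(ν+2)/2)` has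
derivative `g2` at `b`. -/
lemma hasDerivAt_phi {ν r a : ℝ} (h : a < r) (b : ℝ) :
    HasDerivAt (fun t : ℝ => -ν * t * ((r-a)^2 + t^2) ^ (-(ν+2)/2))
      (g2 ν r ⟨a, b⟩) b := by
  have hQ : (r-a)^2 + b^2 ≠ 0 := by
    have h1 : 0 < (r-a)^2 := by have := sub_pos.2 h; positivity
    have := sq_nonneg b; intro hc; linarith [hc ▸ h1]
  have hq : HasDerivAt (fun t : ℝ => (r-a)^2 + t^2) (2*b) b := by
    simpa using ((hasDerivAt_id b).pow 2).const_add ((r-a)^2)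
  have hp := hq.rpow_const (p := -(ν+2)/2) (Or.inl hQ)
  have hl : HasDerivAt (fun t : ℝ => -ν * t) (-ν) b := by
    simpa using (hasDerivAt_id b).const_mul (-ν)
  have := hl.mul hp
  refine this.congr_deriv (Eq.symm ?_)
  have he : -(ν+2)/2 - 1 = -(ν+4)/2 := by ring
  unfold g2 pQ
  simp only [Complex.ofReal_re]
  rw [← he]
  show ν*(ν+2)*b^2 * ((r - a)^2 + b^2) ^ (-(ν+2)/2-1) - ν * ((r-a)^2+b^2) ^ (-(ν+2)/2) = _
  ring

lemma f2_add_g2 {ν r : ℝ} {y : ℂ} (h : y.re < r) :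
    f2 ν r y = ν^2 * pQ r y ^ (-(ν+2)/2) - g2 ν r y := by
  have hQ : 0 < pQ r y := pQ_pos h
  have key : pQ r y ^ (-(ν+4)/2) * pQ r y = pQ r y ^ (-(ν+2)/2) := by
    nth_rewrite 2 [← Real.rpow_one (pQ r y)]
    rw [← Real.rpow_add hQ]
    congr 1
    ring
  simp only [pQ] at key
  unfold f2 g2 pQ
  linear_combination (ν*(ν+2)) * key

lemma measurable_pQ_rpow (r e : ℝ) : Measurable (fun y : ℂ => pQ r y ^ e) := by
  unfold pQ; measurability

lemma measurable_f0 (ν r : ℝ) : Measurable (f0 ν r) := measurable_pQ_rpow r _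

lemma measurable_f1 (ν r : ℝ) : Measurable (f1 ν r) :=
  ((measurable_const.mul (measurable_const.sub Complex.measurable_re))).mul
    (measurable_pQ_rpow r _)

lemma measurable_f2 (ν r : ℝ) : Measurable (f2 ν r) :=
  (((measurable_const.mul
      ((measurable_const.sub Complex.measurable_re).pow_const 2))).mul
    (measurable_pQ_rpow r _)).sub (measurable_const.mul (measurable_pQ_rpow r _))

lemma measurable_g2 (ν r : ℝ) : Measurable (g2 ν r) :=
  (((measurable_const.mul (Complex.measurable_im.pow_const 2))).mul
    (measurable_pQ_rpow r _)).sub (measurable_const.mul (measurable_pQ_rpow r _))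

/-- bound on `pQ^e` for negative exponents, given a lower bound on `r - y.re`. -/
lemma pQ_rpow_le {r δ e : ℝ} {y : ℂ} (hδ : 0 < δ) (h : δ ≤ r - y.re) (he : e ≤ 0) :
    pQ r y ^ e ≤ (δ^2) ^ e := by
  apply Real.rpow_le_rpow_of_nonpos (by positivity)
  · have := sq_nonneg y.im
    unfold pQ
    nlinarith
  · exact he

instance : IsFiniteMeasure (volume.restrict (ball (0:ℂ) 1)) :=
  ⟨by rw [Measure.restrict_apply_univ]; exact measure_ball_lt_top⟩

lemma integrableOn_ball_of_bound {g : ℂ → ℝ} (hg : Measurable g) (C : ℝ)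
    (h : ∀ y ∈ ball (0:ℂ) 1, ‖g y‖ ≤ C) : IntegrableOn g (ball (0:ℂ) 1) := by
  refine ⟨hg.aestronglyMeasurable, ?_⟩
  apply HasFiniteIntegral.of_bounded (C := C)
  exact (ae_restrict_mem measurableSet_ball).mono h

lemma ball_mem_re_im {y : ℂ} (hy : y ∈ ball (0:ℂ) 1) : |y.re| < 1 ∧ |y.im| < 1 := by
  rw [mem_ball, Complex.dist_eq, sub_zero] at hy
  exact ⟨lt_of_le_of_lt (Complex.abs_re_le_norm y) hy,
    lt_of_le_of_lt (Complex.abs_im_le_norm y) hy⟩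


lemma ball_facts {r x : ℝ} (hr : 1 < r) (hx : x ∈ ball r (min ((r-1)/2) 1)) {y : ℂ}
    (hy : y ∈ ball (0:ℂ) 1) : (r-1)/2 < x - y.re ∧ x - y.re < r + 2 ∧ y.re < x := by
  have h1 := (ball_mem_re_im hy).1
  rw [mem_ball, Real.dist_eq] at hx
  have hx1 : |x - r| < (r-1)/2 := lt_of_lt_of_le hx (min_le_left _ _)
  have hx2 : |x - r| < 1 := lt_of_lt_of_le hx (min_le_right _ _)
  rw [abs_lt] at hx1 hx2
  rw [abs_lt] at h1
  refine ⟨by linarith, by linarith, by linarith⟩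

lemma hasDerivAt_int_f0 {ν r : ℝ} (hν : 0 < ν) (hr : 1 < r) :
    HasDerivAt (fun x => ∫ y in ball (0:ℂ) 1, f0 ν x y)
      (∫ y in ball (0:ℂ) 1, f1 ν r y) r := by
  set δ : ℝ := (r-1)/2 with hδdef
  have hδ : 0 < δ := by simp only [hδdef]; linarith
  set ε : ℝ := min ((r-1)/2) 1 with hεdef
  have hε : 0 < ε := lt_min hδ one_pos
  have he2 : -(ν+2)/2 ≤ 0 := by linarith
  refine (hasDerivAt_integral_of_dominated_loc_of_deriv_le (F := fun x y => f0 ν x y)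
    (F' := fun x y => f1 ν x y) (bound := fun _ => ν * (r+2) * (δ^2) ^ (-(ν+2)/2))
    (ball_mem_nhds r hε) ?_ ?_ ?_ ?_ ?_ ?_).2
  · exact Filter.Eventually.of_forall fun x => (measurable_f0 ν x).aestronglyMeasurable
  · apply integrableOn_ball_of_bound (measurable_f0 ν r) (((r-1)^2) ^ (-ν/2))
    intro y hy
    have h1 := (ball_mem_re_im hy).1
    rw [abs_lt] at h1
    have hple : pQ r y ^ (-ν/2) ≤ ((r-1)^2) ^ (-ν/2) :=
      pQ_rpow_le (by linarith) (by linarith) (by linarith)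
    unfold f0
    rw [Real.norm_eq_abs, abs_of_nonneg (Real.rpow_nonneg (pQ_nonneg r y) _)]
    exact hple
  · exact (measurable_f1 ν r).aestronglyMeasurable
  · filter_upwards [ae_restrict_mem measurableSet_ball] with y hy x hx
    obtain ⟨hb1, hb2, hb3⟩ := ball_facts hr hx hy
    have hQe : 0 ≤ pQ x y ^ (-(ν+2)/2) := Real.rpow_nonneg (pQ_nonneg x y) _
    have hple : pQ x y ^ (-(ν+2)/2) ≤ (δ^2) ^ (-(ν+2)/2) :=
      pQ_rpow_le hδ hb1.le he2
    have hnorm : ‖f1 ν x y‖ = ν * (x - y.re) * pQ x y ^ (-(ν+2)/2) := by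
      unfold f1
      rw [Real.norm_eq_abs, abs_mul, abs_of_nonneg hQe, abs_of_nonpos (by nlinarith)]
      ring
    rw [hnorm]
    have h0 : 0 ≤ (δ^2) ^ (-(ν+2)/2) := Real.rpow_nonneg (by positivity) _
    calc ν * (x - y.re) * pQ x y ^ (-(ν+2)/2)
        ≤ ν * (x - y.re) * (δ^2) ^ (-(ν+2)/2) :=
          mul_le_mul_of_nonneg_left hple (mul_nonneg hν.le (by linarith))
      _ ≤ ν * (r+2) * (δ^2) ^ (-(ν+2)/2) :=
          mul_le_mul_of_nonneg_right (mul_le_mul_of_nonneg_left hb2.le hν.le) h0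
  · exact integrable_const _
  · filter_upwards [ae_restrict_mem measurableSet_ball] with y hy x hx
    exact hasDerivAt_f0 (ball_facts hr hx hy).2.2

lemma hasDerivAt_int_f1 {ν r : ℝ} (hν : 0 < ν) (hr : 1 < r) :
    HasDerivAt (fun x => ∫ y in ball (0:ℂ) 1, f1 ν x y)
      (∫ y in ball (0:ℂ) 1, f2 ν r y) r := by
  set δ : ℝ := (r-1)/2 with hδdef
  have hδ : 0 < δ := by simp only [hδdef]; linarith
  set ε : ℝ := min ((r-1)/2) 1 with hεdef
  have hε : 0 < ε := lt_min hδ one_pos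
  have he2 : -(ν+2)/2 ≤ 0 := by linarith
  have he4 : -(ν+4)/2 ≤ 0 := by linarith
  refine (hasDerivAt_integral_of_dominated_loc_of_deriv_le (F := fun x y => f1 ν x y)
    (F' := fun x y => f2 ν x y)
    (bound := fun _ => ν*(ν+2)*(r+2)^2 * (δ^2) ^ (-(ν+4)/2) + ν * (δ^2) ^ (-(ν+2)/2))
    (ball_mem_nhds r hε) ?_ ?_ ?_ ?_ ?_ ?_).2
  · exact Filter.Eventually.of_forall fun x => (measurable_f1 ν x).aestronglyMeasurable
  · apply integrableOn_ball_of_bound (measurable_f1 ν r) (ν * (r+2) * ((r-1)^2) ^ (-(ν+2)/2))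
    intro y hy
    have h1 := (ball_mem_re_im hy).1
    rw [abs_lt] at h1
    have hQe : 0 ≤ pQ r y ^ (-(ν+2)/2) := Real.rpow_nonneg (pQ_nonneg r y) _
    have hple : pQ r y ^ (-(ν+2)/2) ≤ ((r-1)^2) ^ (-(ν+2)/2) :=
      pQ_rpow_le (by linarith) (by linarith) he2
    have hnorm : ‖f1 ν r y‖ = ν * (r - y.re) * pQ r y ^ (-(ν+2)/2) := by
      unfold f1
      rw [Real.norm_eq_abs, abs_mul, abs_of_nonneg hQe, abs_of_nonpos (by nlinarith)]
      ring
    rw [hnorm]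
    have h0 : 0 ≤ ((r-1)^2) ^ (-(ν+2)/2) := Real.rpow_nonneg (by positivity) _
    calc ν * (r - y.re) * pQ r y ^ (-(ν+2)/2)
        ≤ ν * (r - y.re) * ((r-1)^2) ^ (-(ν+2)/2) :=
          mul_le_mul_of_nonneg_left hple (mul_nonneg hν.le (by linarith))
      _ ≤ ν * (r+2) * ((r-1)^2) ^ (-(ν+2)/2) :=
          mul_le_mul_of_nonneg_right (mul_le_mul_of_nonneg_left (by linarith) hν.le) h0
  · exact (measurable_f2 ν r).aestronglyMeasurable
  · filter_upwards [ae_restrict_mem measurableSet_ball] with y hy x hx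
    obtain ⟨hb1, hb2, hb3⟩ := ball_facts hr hx hy
    have hQ4 : 0 ≤ pQ x y ^ (-(ν+4)/2) := Real.rpow_nonneg (pQ_nonneg x y) _
    have hQ2 : 0 ≤ pQ x y ^ (-(ν+2)/2) := Real.rpow_nonneg (pQ_nonneg x y) _
    have hp4 : pQ x y ^ (-(ν+4)/2) ≤ (δ^2) ^ (-(ν+4)/2) := pQ_rpow_le hδ hb1.le he4
    have hp2 : pQ x y ^ (-(ν+2)/2) ≤ (δ^2) ^ (-(ν+2)/2) := pQ_rpow_le hδ hb1.le he2
    have htri : ‖f2 ν x y‖ ≤ ν*(ν+2)*(x - y.re)^2 * pQ x y ^ (-(ν+4)/2)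
        + ν * pQ x y ^ (-(ν+2)/2) := by
      unfold f2
      refine (abs_sub _ _).trans ?_
      rw [abs_of_nonneg (by positivity), abs_of_nonneg (by positivity)]
    refine htri.trans ?_
    have h04 : 0 ≤ (δ^2) ^ (-(ν+4)/2) := Real.rpow_nonneg (by positivity) _
    have hsq : (x - y.re)^2 ≤ (r+2)^2 := by nlinarith
    have t1 : ν*(ν+2)*(x - y.re)^2 * pQ x y ^ (-(ν+4)/2)
        ≤ ν*(ν+2)*(r+2)^2 * (δ^2) ^ (-(ν+4)/2) := by
      have hc : 0 ≤ ν*(ν+2) := by nlinarith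
      nlinarith [mul_le_mul hsq hp4 hQ4 (by positivity : (0:ℝ) ≤ (r+2)^2)]
    have t2 : ν * pQ x y ^ (-(ν+2)/2) ≤ ν * (δ^2) ^ (-(ν+2)/2) :=
      mul_le_mul_of_nonneg_left hp2 hν.le
    linarith
  · exact integrable_const _
  · filter_upwards [ae_restrict_mem measurableSet_ball] with y hy x hx
    exact hasDerivAt_f1 (ball_facts hr hx hy).2.2


set_option maxHeartbeats 2000000 in
lemma integral_g2_nonpos {ν r : ℝ} (hν : 0 < ν) (hr : 1 < r) :
    ∫ y in ball (0:ℂ) 1, g2 ν r y ≤ 0 := by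
  have he2 : -(ν+2)/2 ≤ 0 := by linarith
  have he4 : -(ν+4)/2 ≤ 0 := by linarith
  set h : ℝ × ℝ → ℝ := fun p => g2 ν r ⟨p.1, p.2⟩ with hh
  set S : Set (ℝ × ℝ) := {p | p.1^2 + p.2^2 < 1} with hSdef
  have hpre : Complex.measurableEquivRealProd.symm ⁻¹' (ball (0:ℂ) 1) = S := by
    ext p
    simp only [Set.mem_preimage, Complex.measurableEquivRealProd_symm_apply, mem_ball,
      Complex.dist_eq, sub_zero, Complex.norm_def, Complex.normSq_apply, hSdef,
      Set.mem_setOf_eq]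
    have h0 : 0 ≤ p.1*p.1 + p.2*p.2 := add_nonneg (mul_self_nonneg _) (mul_self_nonneg _)
    constructor
    · intro hx
      nlinarith [Real.sq_sqrt h0, Real.sqrt_nonneg (p.1*p.1 + p.2*p.2)]
    · intro hx
      calc Real.sqrt (p.1*p.1 + p.2*p.2) < Real.sqrt 1 := Real.sqrt_lt_sqrt h0 (by nlinarith)
        _ = 1 := Real.sqrt_one
  have htrans : ∫ y in ball (0:ℂ) 1, g2 ν r y = ∫ p in S, h p := by
    rw [← MeasurePreserving.setIntegral_preimage_emb
      (Complex.volume_preserving_equiv_real_prod.symm)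
      Complex.measurableEquivRealProd.symm.measurableEmbedding (g2 ν r) (ball 0 1), hpre]
    rfl
  have hSmeas : MeasurableSet S := by
    have hc : Continuous fun p : ℝ × ℝ => p.1^2 + p.2^2 := by continuity
    exact (isOpen_lt hc continuous_const).measurableSet
  have hvolS : volume S < ⊤ := by
    rw [← hpre, (Complex.volume_preserving_equiv_real_prod.symm).measure_preimage
      measurableSet_ball.nullMeasurableSet]
    exact measure_ball_lt_top
  have hmeas_h : Measurable h :=
    (measurable_g2 ν r).comp Complex.measurableEquivRealProd.symm.measurable
  have hboundS : IntegrableOn h S := by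
    haveI : IsFiniteMeasure (volume.restrict S) :=
      ⟨by rw [Measure.restrict_apply_univ]; exact hvolS⟩
    refine ⟨hmeas_h.aestronglyMeasurable, ?_⟩
    apply HasFiniteIntegral.of_bounded
      (C := ν*(ν+2) * ((r-1)^2) ^ (-(ν+4)/2) + ν * ((r-1)^2) ^ (-(ν+2)/2))
    filter_upwards [ae_restrict_mem hSmeas] with p hp
    have hp1 : p.1^2 + p.2^2 < 1 := hp
    have hb1 : p.1 < 1 := by nlinarith [sq_nonneg p.2, sq_nonneg (p.1 - 1), sq_nonneg (p.1+1)]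
    have hb2 : p.2^2 ≤ 1 := by nlinarith [sq_nonneg p.1]
    have hple4 : pQ r ⟨p.1, p.2⟩ ^ (-(ν+4)/2) ≤ ((r-1)^2) ^ (-(ν+4)/2) :=
      pQ_rpow_le (by linarith) (by simp; linarith) he4
    have hple2 : pQ r ⟨p.1, p.2⟩ ^ (-(ν+2)/2) ≤ ((r-1)^2) ^ (-(ν+2)/2) :=
      pQ_rpow_le (by linarith) (by simp; linarith) he2
    have hQ4 : 0 ≤ pQ r ⟨p.1, p.2⟩ ^ (-(ν+4)/2) := Real.rpow_nonneg (pQ_nonneg _ _) _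
    have hQ2 : 0 ≤ pQ r ⟨p.1, p.2⟩ ^ (-(ν+2)/2) := Real.rpow_nonneg (pQ_nonneg _ _) _
    have him : (⟨p.1, p.2⟩ : ℂ).im = p.2 := rfl
    have htri : ‖h p‖ ≤ ν*(ν+2)*p.2^2 * pQ r ⟨p.1, p.2⟩ ^ (-(ν+4)/2)
        + ν * pQ r ⟨p.1, p.2⟩ ^ (-(ν+2)/2) := by
      show ‖g2 ν r ⟨p.1, p.2⟩‖ ≤ _
      unfold g2
      rw [Real.norm_eq_abs, him]
      refine (abs_sub _ _).trans ?_
      rw [abs_of_nonneg (by positivity), abs_of_nonneg (by positivity)]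
    refine htri.trans ?_
    have t1 : ν*(ν+2)*p.2^2 * pQ r ⟨p.1, p.2⟩ ^ (-(ν+4)/2)
        ≤ ν*(ν+2) * ((r-1)^2) ^ (-(ν+4)/2) := by
      have hcoef : (0:ℝ) ≤ ν*(ν+2) := by nlinarith
      have hx1 : ν*(ν+2)*p.2^2 ≤ ν*(ν+2)*1 := by nlinarith
      have e1 : ν*(ν+2)*p.2^2 * pQ r ⟨p.1, p.2⟩ ^ (-(ν+4)/2)
          ≤ ν*(ν+2)*1 * ((r-1)^2) ^ (-(ν+4)/2) :=
        mul_le_mul hx1 hple4 hQ4 (by linarith)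
      have e2 : ν*(ν+2)*1 * ((r-1)^2) ^ (-(ν+4)/2)
          = ν*(ν+2) * ((r-1)^2) ^ (-(ν+4)/2) := by ring
      linarith
    have t2 : ν * pQ r ⟨p.1, p.2⟩ ^ (-(ν+2)/2) ≤ ν * ((r-1)^2) ^ (-(ν+2)/2) :=
      mul_le_mul_of_nonneg_left hple2 hν.le
    linarith
  rw [htrans, ← integral_indicator hSmeas]
  have hint_ind : Integrable (S.indicator h) := hboundS.integrable_indicator hSmeas
  rw [show (volume : Measure (ℝ × ℝ)) = (volume : Measure ℝ).prod volume from
    MeasureTheory.Measure.volume_eq_prod ℝ ℝ] at hint_ind ⊢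
  rw [MeasureTheory.integral_prod _ hint_ind]
  apply integral_nonpos
  intro a
  simp only [Pi.zero_apply]
  show (∫ b : ℝ, S.indicator h (a, b)) ≤ 0
  by_cases ha : a^2 < 1
  · set s := Real.sqrt (1 - a^2) with hsdef
    have hs : 0 < s := Real.sqrt_pos.2 (by linarith)
    have hs2 : s^2 = 1 - a^2 := Real.sq_sqrt (by linarith)
    have ha1 : a < r := by nlinarith
    have hQpos : ∀ t : ℝ, 0 < (r-a)^2 + t^2 := fun t => by
      have : 0 < (r-a)^2 := pow_pos (sub_pos.2 ha1) 2
      nlinarith [sq_nonneg t]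
    have hmemiff : ∀ b : ℝ, (a, b) ∈ S ↔ b ∈ Set.Ioo (-s) s := by
      intro b
      simp only [hSdef, Set.mem_setOf_eq, Set.mem_Ioo]
      constructor
      · intro hb
        have hb2 : b^2 < s^2 := by linarith
        constructor <;> nlinarith
      · rintro ⟨h1, h2⟩
        nlinarith
    have hfun : (fun b => S.indicator h (a, b))
        = (Set.Ioo (-s) s).indicator (fun b => h (a, b)) := by
      funext b
      by_cases hb : (a, b) ∈ S
      · rw [Set.indicator_of_mem hb, Set.indicator_of_mem ((hmemiff b).1 hb)]
      · rw [Set.indicator_of_notMem hb,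
          Set.indicator_of_notMem (fun hc => hb ((hmemiff b).2 hc))]
    rw [hfun, integral_indicator measurableSet_Ioo]
    have hcont : Continuous fun b : ℝ => h (a, b) := by
      have hbase : Continuous fun b : ℝ => (r-a)^2 + b^2 :=
        continuous_const.add (continuous_pow 2)
      have h4 : Continuous fun b : ℝ => ((r-a)^2 + b^2) ^ (-(ν+4)/2) :=
        hbase.rpow_const fun b => Or.inl (hQpos b).ne'
      have h2c : Continuous fun b : ℝ => ((r-a)^2 + b^2) ^ (-(ν+2)/2) :=
        hbase.rpow_const fun b => Or.inl (hQpos b).ne'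
      have hfe : (fun b : ℝ => h (a, b)) = fun b : ℝ =>
          ν*(ν+2)*b^2 * ((r-a)^2 + b^2) ^ (-(ν+4)/2)
            - ν * ((r-a)^2 + b^2) ^ (-(ν+2)/2) := by
        funext b
        rfl
      rw [hfe]
      exact ((continuous_const.mul (continuous_pow 2)).mul h4).sub
        (continuous_const.mul h2c)
    have heq : ∫ b in Set.Ioo (-s) s, h (a, b)
        = ∫ b in (-s)..s, h (a, b) := by
      rw [intervalIntegral.integral_of_le (by linarith), integral_Ioc_eq_integral_Ioo]
    rw [heq]
    have hftc := intervalIntegral.integral_eq_sub_of_hasDerivAt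
      (f := fun t : ℝ => -ν * t * ((r-a)^2 + t^2) ^ (-(ν+2)/2))
      (f' := fun t : ℝ => h (a, t))
      (fun t _ => hasDerivAt_phi ha1 t)
      ((hcont.intervalIntegrable (-s) s))
    have hX : 0 ≤ ((r-a)^2 + s^2) ^ (-(ν+2)/2) := Real.rpow_nonneg (hQpos s).le _
    have hval : ∫ b in (-s)..s, h (a, b)
        = -ν * s * ((r-a)^2 + s^2) ^ (-(ν+2)/2)
          - (-ν * (-s) * ((r-a)^2 + (-s)^2) ^ (-(ν+2)/2)) := hftc
    refine hval.trans_le ?_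
    have hns : (-s)^2 = s^2 := neg_sq s
    rw [hns]
    nlinarith [mul_nonneg (mul_nonneg hν.le hs.le) hX]
  · have : (fun b => S.indicator h (a, b)) = fun _ => (0:ℝ) := by
      funext b
      apply Set.indicator_of_notMem
      simp only [hSdef, Set.mem_setOf_eq, not_lt]
      nlinarith [sq_nonneg b]
    rw [this]
    simp

lemma integral_f2_pos {ν r : ℝ} (hν : 0 < ν) (hr : 1 < r) :
    0 < ∫ y in ball (0:ℂ) 1, f2 ν r y := by
  have he2 : -(ν+2)/2 ≤ 0 := by linarith
  have hre : ∀ y ∈ ball (0:ℂ) 1, y.re < r := fun y hy => by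
    have h1 := (ball_mem_re_im hy).1
    rw [abs_lt] at h1
    linarith [h1.2]
  have hint1 : IntegrableOn (fun y : ℂ => ν^2 * pQ r y ^ (-(ν+2)/2)) (ball (0:ℂ) 1) := by
    apply integrableOn_ball_of_bound ((measurable_pQ_rpow r (-(ν+2)/2)).const_mul (ν^2))
      (ν^2 * ((r-1)^2) ^ (-(ν+2)/2))
    intro y hy
    have h1 := (ball_mem_re_im hy).1
    rw [abs_lt] at h1
    have hple : pQ r y ^ (-(ν+2)/2) ≤ ((r-1)^2) ^ (-(ν+2)/2) :=
      pQ_rpow_le (by linarith) (by linarith [h1.2]) he2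
    rw [Real.norm_eq_abs, abs_mul, abs_of_nonneg (Real.rpow_nonneg (pQ_nonneg r y) _),
      abs_of_nonneg (by positivity : (0:ℝ) ≤ ν^2)]
    exact mul_le_mul_of_nonneg_left hple (by positivity)
  have hint2 : IntegrableOn (g2 ν r) (ball (0:ℂ) 1) := by
    apply integrableOn_ball_of_bound (measurable_g2 ν r)
      (ν*(ν+2) * ((r-1)^2) ^ (-(ν+4)/2) + ν * ((r-1)^2) ^ (-(ν+2)/2))
    intro y hy
    obtain ⟨h1, h2⟩ := ball_mem_re_im hy
    rw [abs_lt] at h1 h2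
    have he4 : -(ν+4)/2 ≤ 0 := by linarith
    have hple4 : pQ r y ^ (-(ν+4)/2) ≤ ((r-1)^2) ^ (-(ν+4)/2) :=
      pQ_rpow_le (by linarith) (by linarith [h1.2]) he4
    have hple2 : pQ r y ^ (-(ν+2)/2) ≤ ((r-1)^2) ^ (-(ν+2)/2) :=
      pQ_rpow_le (by linarith) (by linarith [h1.2]) he2
    have hQ4 : 0 ≤ pQ r y ^ (-(ν+4)/2) := Real.rpow_nonneg (pQ_nonneg _ _) _
    have hQ2 : 0 ≤ pQ r y ^ (-(ν+2)/2) := Real.rpow_nonneg (pQ_nonneg _ _) _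
    have him : y.im^2 ≤ 1 := by nlinarith [h2.1, h2.2]
    have htri : ‖g2 ν r y‖ ≤ ν*(ν+2)*y.im^2 * pQ r y ^ (-(ν+4)/2)
        + ν * pQ r y ^ (-(ν+2)/2) := by
      unfold g2
      rw [Real.norm_eq_abs]
      refine (abs_sub _ _).trans ?_
      rw [abs_of_nonneg (by positivity), abs_of_nonneg (by positivity)]
    refine htri.trans ?_
    have t1 : ν*(ν+2)*y.im^2 * pQ r y ^ (-(ν+4)/2)
        ≤ ν*(ν+2) * ((r-1)^2) ^ (-(ν+4)/2) := by
      have hcoef : (0:ℝ) ≤ ν*(ν+2) := by nlinarith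
      have hx1 : ν*(ν+2)*y.im^2 ≤ ν*(ν+2)*1 := by nlinarith
      have e1 : ν*(ν+2)*y.im^2 * pQ r y ^ (-(ν+4)/2)
          ≤ ν*(ν+2)*1 * ((r-1)^2) ^ (-(ν+4)/2) :=
        mul_le_mul hx1 hple4 hQ4 (by linarith)
      have e2 : ν*(ν+2)*1 * ((r-1)^2) ^ (-(ν+4)/2)
          = ν*(ν+2) * ((r-1)^2) ^ (-(ν+4)/2) := by ring
      linarith
    have t2 : ν * pQ r y ^ (-(ν+2)/2) ≤ ν * ((r-1)^2) ^ (-(ν+2)/2) :=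
      mul_le_mul_of_nonneg_left hple2 hν.le
    linarith
  have hrw : ∫ y in ball (0:ℂ) 1, f2 ν r y
      = (∫ y in ball (0:ℂ) 1, ν^2 * pQ r y ^ (-(ν+2)/2))
        - ∫ y in ball (0:ℂ) 1, g2 ν r y := by
    rw [← integral_sub hint1 hint2]
    apply setIntegral_congr_fun measurableSet_ball
    intro y hy
    exact f2_add_g2 (hre y hy)
  have hc : (0:ℝ) < ν^2 * (((r+1)^2 + 1 : ℝ)) ^ (-(ν+2)/2) := by positivity
  have hlow : ν^2 * (((r+1)^2 + 1 : ℝ)) ^ (-(ν+2)/2) * (volume (ball (0:ℂ) 1)).toReal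
      ≤ ∫ y in ball (0:ℂ) 1, ν^2 * pQ r y ^ (-(ν+2)/2) := by
    apply setIntegral_ge_of_const_le_real measurableSet_ball measure_ball_lt_top.ne _ hint1
    intro y hy
    obtain ⟨h1, h2⟩ := ball_mem_re_im hy
    rw [abs_lt] at h1 h2
    have hQle : pQ r y ≤ (r+1)^2 + 1 := by
      unfold pQ
      nlinarith [h1.1, h1.2, h2.1, h2.2]
    have := Real.rpow_le_rpow_of_nonpos (pQ_pos (by linarith [h1.2])) hQle he2
    exact mul_le_mul_of_nonneg_left this (by positivity)
  have hvol : 0 < (volume (ball (0:ℂ) 1)).toReal :=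
    ENNReal.toReal_pos (measure_ball_pos volume 0 one_pos).ne' measure_ball_lt_top.ne
  have h1pos : 0 < ∫ y in ball (0:ℂ) 1, ν^2 * pQ r y ^ (-(ν+2)/2) :=
    lt_of_lt_of_le (by positivity) hlow
  have h2np := integral_g2_nonpos hν hr
  rw [hrw]
  linarith

end Stmt8Aux

/-- For `ν ∈ (0,1]`, the potential `U(r) = −∫_𝔻 |r − y|^{−ν} dy` is twice differentiable on
`(1,∞)` with `U'' < 0` there. -/
theorem stmt8 (ν : ℝ) (hν : ν ∈ Set.Ioc (0 : ℝ) 1)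
    (U : ℝ → ℝ)
    (hU : ∀ r : ℝ, U r = -∫ y in ball (0 : ℂ) 1, ‖(r : ℂ) - y‖ ^ (-ν)) :
    ∀ r : ℝ, 1 < r →
      DifferentiableAt ℝ U r ∧ DifferentiableAt ℝ (deriv U) r ∧ deriv (deriv U) r < 0 := by
  obtain ⟨hν0, _⟩ := hν
  intro r hr
  have hU' : U = fun x => -∫ y in ball (0:ℂ) 1, Stmt8Aux.f0 ν x y := by
    funext x
    rw [hU x]
    congr 1
    apply setIntegral_congr_fun measurableSet_ball
    intro y _
    exact Stmt8Aux.abs_eq ν x y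
  set V : ℝ → ℝ := fun x => -∫ y in ball (0:ℂ) 1, Stmt8Aux.f1 ν x y with hVdef
  have hUd : ∀ x : ℝ, 1 < x → HasDerivAt U (V x) x := by
    intro x hx
    rw [hU']
    exact (Stmt8Aux.hasDerivAt_int_f0 hν0 hx).neg
  have hVd : HasDerivAt V (-∫ y in ball (0:ℂ) 1, Stmt8Aux.f2 ν r y) r :=
    (Stmt8Aux.hasDerivAt_int_f1 hν0 hr).neg
  have hev : deriv U =ᶠ[nhds r] V := by
    filter_upwards [Ioi_mem_nhds hr] with x hx
    exact (hUd x hx).deriv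
  refine ⟨(hUd r hr).differentiableAt, ?_, ?_⟩
  · rw [hev.differentiableAt_iff]
    exact hVd.differentiableAt
  · rw [hev.deriv_eq, hVd.deriv]
    have := Stmt8Aux.integral_f2_pos hν0 hr
    linarith
end

section
/- Let ν ∈ (0,1] and define U : (1,∞) → ℝ by U(r) = −∫_𝔻 |r − y|^{−ν} dy, where r ∈ ℝ ⊂ ℂ and the integral is over the open unit disk with respect to planar Lebesgue measure. Then U is differentiable on (1,∞), the function r ↦ U'(r)/r is strictly decreasing on (1,∞), and U'(r)/r → 0 as r → ∞. -/
open Metric MeasureTheory Filter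

noncomputable def Pf (ν a b t : ℝ) : ℝ := ((t-a)^2+b) ^ (-ν/2)
noncomputable def Pf1 (ν a b t : ℝ) : ℝ := -ν * (t-a) * ((t-a)^2+b) ^ (-ν/2-1)
noncomputable def Pf2 (ν a b t : ℝ) : ℝ :=
  -ν * ((t-a)^2+b) ^ (-ν/2-1) + ν*(ν+2)*(t-a)^2 * ((t-a)^2+b) ^ (-ν/2-1-1)

lemma hasDerivAt_q (a b t : ℝ) : HasDerivAt (fun t => (t-a)^2+b) (2*(t-a)) t := by
  simpa using (((hasDerivAt_id t).sub_const a).pow 2).add_const b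

lemma hasDerivAt_Pf {a b t : ℝ} (ν : ℝ) (hq : (t-a)^2+b ≠ 0) :
    HasDerivAt (Pf ν a b) (Pf1 ν a b t) t := by
  have h := (hasDerivAt_q a b t).rpow_const (p := -ν/2) (Or.inl hq)
  refine h.congr_deriv ?_
  unfold Pf1; ring

lemma hasDerivAt_Pf1 {a b t : ℝ} (ν : ℝ) (hq : (t-a)^2+b ≠ 0) :
    HasDerivAt (Pf1 ν a b) (Pf2 ν a b t) t := by
  have h1 : HasDerivAt (fun t : ℝ => -ν * (t-a)) (-ν) t := by
    simpa using ((hasDerivAt_id t).sub_const a).const_mul (-ν)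
  have h2 := (hasDerivAt_q a b t).rpow_const (p := -ν/2-1) (Or.inl hq)
  have := h1.mul h2
  refine this.congr_deriv ?_
  unfold Pf2; ring

lemma myIntegrableOn {f : ℂ → ℝ} (hf : ContinuousOn f (closedBall (0:ℂ) 1)) :
    IntegrableOn f (ball (0:ℂ) 1) :=
  (hf.integrableOn_compact (isCompact_closedBall 0 1)).mono_set ball_subset_closedBall

lemma contOn_rpow {g : ℂ → ℝ} (e : ℝ) (hg : Continuous g)
    (h0 : ∀ y ∈ closedBall (0:ℂ) 1, g y ≠ 0) :
    ContinuousOn (fun y => g y ^ e) (closedBall (0:ℂ) 1) := fun y hy =>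
  (hg.continuousAt.rpow_const (Or.inl (h0 y hy))).continuousWithinAt

lemma hasDerivAt_setIntegral (F F' : ℝ → ℂ → ℝ) (t₀ ε C : ℝ) (hε : 0 < ε)
    (hmeas : ∀ t ∈ ball t₀ ε, ContinuousOn (F t) (closedBall (0:ℂ) 1))
    (hmeas' : ContinuousOn (F' t₀) (closedBall (0:ℂ) 1))
    (hbound : ∀ y ∈ ball (0:ℂ) 1, ∀ t ∈ ball t₀ ε, |F' t y| ≤ C)
    (hderiv : ∀ y ∈ ball (0:ℂ) 1, ∀ t ∈ ball t₀ ε, HasDerivAt (fun s => F s y) (F' t y) t) :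
    HasDerivAt (fun t => ∫ y in ball (0:ℂ) 1, F t y) (∫ y in ball (0:ℂ) 1, F' t₀ y) t₀ := by
  have hball : MeasurableSet (ball (0:ℂ) 1) := measurableSet_ball
  have hF_meas : ∀ᶠ t in nhds t₀, AEStronglyMeasurable (F t) (volume.restrict (ball (0:ℂ) 1)) := by
    filter_upwards [ball_mem_nhds t₀ hε] with t ht
    exact ((hmeas t ht).mono ball_subset_closedBall).aestronglyMeasurable hball
  have hF_int : Integrable (F t₀) (volume.restrict (ball (0:ℂ) 1)) :=
    myIntegrableOn (hmeas t₀ (mem_ball_self hε))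
  have hF'_meas : AEStronglyMeasurable (F' t₀) (volume.restrict (ball (0:ℂ) 1)) :=
    (hmeas'.mono ball_subset_closedBall).aestronglyMeasurable hball
  have hbound_int : Integrable (fun _ : ℂ => C) (volume.restrict (ball (0:ℂ) 1)) :=
    integrableOn_const measure_ball_lt_top.ne
  have h_bound : ∀ᵐ y ∂(volume.restrict (ball (0:ℂ) 1)), ∀ t ∈ ball t₀ ε, ‖F' t y‖ ≤ C := by
    filter_upwards [ae_restrict_mem hball] with y hy
    simpa [Real.norm_eq_abs] using hbound y hy
  have h_diff : ∀ᵐ y ∂(volume.restrict (ball (0:ℂ) 1)),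
      ∀ t ∈ ball t₀ ε, HasDerivAt (fun s => F s y) (F' t y) t := by
    filter_upwards [ae_restrict_mem hball] with y hy
    exact hderiv y hy
  exact (hasDerivAt_integral_of_dominated_loc_of_deriv_le (ball_mem_nhds t₀ hε) hF_meas hF_int hF'_meas
    h_bound hbound_int h_diff).2

lemma main_deriv (ν : ℝ) (hν : 0 < ν) (A B : ℂ → ℝ) (hA : Continuous A) (hB : Continuous B)
    (t₀ ε m M : ℝ) (hε : 0 < ε) (hm : 0 < m)
    (hlow : ∀ y ∈ closedBall (0:ℂ) 1, ∀ t ∈ ball t₀ ε, m ≤ (t - A y)^2 + B y)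
    (hM : ∀ y ∈ closedBall (0:ℂ) 1, ∀ t ∈ ball t₀ ε, |t - A y| ≤ M) :
    HasDerivAt (fun t => ∫ y in ball (0:ℂ) 1, Pf ν (A y) (B y) t)
      (∫ y in ball (0:ℂ) 1, Pf1 ν (A y) (B y) t₀) t₀ ∧
    HasDerivAt (fun t => ∫ y in ball (0:ℂ) 1, Pf1 ν (A y) (B y) t)
      (∫ y in ball (0:ℂ) 1, Pf2 ν (A y) (B y) t₀) t₀ := by
  have hM0 : 0 ≤ M := le_trans (abs_nonneg _) (hM 0 (mem_closedBall_self zero_le_one) t₀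
    (mem_ball_self hε))
  have hqpos : ∀ y ∈ closedBall (0:ℂ) 1, ∀ t ∈ ball t₀ ε, (0:ℝ) < (t - A y)^2 + B y :=
    fun y hy t ht => lt_of_lt_of_le hm (hlow y hy t ht)
  have hgcont : ∀ t : ℝ, Continuous (fun y : ℂ => (t - A y)^2 + B y) := fun t =>
    ((continuous_const.sub hA).pow 2).add hB
  have hrpow_le : ∀ (e : ℝ), e ≤ 0 → ∀ y ∈ closedBall (0:ℂ) 1, ∀ t ∈ ball t₀ ε,
      ((t - A y)^2 + B y) ^ e ≤ m ^ e := fun e he y hy t ht =>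
    Real.rpow_le_rpow_of_nonpos hm (hlow y hy t ht) he
  have hc1 : ∀ t ∈ ball t₀ ε, ContinuousOn (fun y => Pf1 ν (A y) (B y) t) (closedBall (0:ℂ) 1) := by
    intro t ht
    unfold Pf1
    exact (continuous_const.mul (continuous_const.sub hA)).continuousOn.mul
      (contOn_rpow _ (hgcont t) (fun y hy => (hqpos y hy t ht).ne'))
  have he1 : (-ν/2-1 : ℝ) ≤ 0 := by linarith
  have he2 : (-ν/2-1-1 : ℝ) ≤ 0 := by linarith
  constructor
  · apply hasDerivAt_setIntegral _ _ t₀ ε (ν * M * m ^ (-ν/2-1)) hε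
    · intro t ht
      unfold Pf
      exact contOn_rpow _ (hgcont t) (fun y hy => (hqpos y hy t ht).ne')
    · exact hc1 t₀ (mem_ball_self hε)
    · intro y hy t ht
      have hy' := ball_subset_closedBall hy
      have hq := hqpos y hy' t ht
      have h1 : |Pf1 ν (A y) (B y) t| = ν * |t - A y| * ((t - A y)^2 + B y) ^ (-ν/2-1) := by
        rw [Pf1, abs_mul, abs_mul, abs_neg, abs_of_pos hν,
          abs_of_nonneg (Real.rpow_nonneg hq.le _)]
      rw [h1]
      have := hrpow_le _ he1 y hy' t ht
      have := hM y hy' t ht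
      have h2 : (0:ℝ) ≤ ((t - A y)^2 + B y) ^ (-ν/2-1) := Real.rpow_nonneg hq.le _
      apply mul_le_mul (by nlinarith [abs_nonneg (t - A y)]) (hrpow_le _ he1 y hy' t ht) h2
      positivity
    · intro y hy t ht
      exact hasDerivAt_Pf ν (hqpos y (ball_subset_closedBall hy) t ht).ne'
  · apply hasDerivAt_setIntegral _ _ t₀ ε
      (ν * m ^ (-ν/2-1) + ν*(ν+2)*M^2 * m ^ (-ν/2-1-1)) hε
    · exact hc1
    · unfold Pf2
      refine ContinuousOn.add ?_ ?_
      · exact continuous_const.continuousOn.mul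
          (contOn_rpow _ (hgcont t₀) (fun y hy => (hqpos y hy t₀ (mem_ball_self hε)).ne'))
      · exact (continuous_const.mul ((continuous_const.sub hA).pow 2)).continuousOn.mul
          (contOn_rpow _ (hgcont t₀) (fun y hy => (hqpos y hy t₀ (mem_ball_self hε)).ne'))
    · intro y hy t ht
      have hy' := ball_subset_closedBall hy
      have hq := hqpos y hy' t ht
      have hr1 := hrpow_le _ he1 y hy' t ht
      have hr2 := hrpow_le _ he2 y hy' t ht
      have hMy := hM y hy' t ht
      have hn1 : (0:ℝ) ≤ ((t - A y)^2 + B y) ^ (-ν/2-1) := Real.rpow_nonneg hq.le _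
      have hn2 : (0:ℝ) ≤ ((t - A y)^2 + B y) ^ (-ν/2-1-1) := Real.rpow_nonneg hq.le _
      have hsq : (t - A y)^2 ≤ M^2 := by nlinarith [abs_nonneg (t - A y), sq_abs (t - A y)]
      calc |Pf2 ν (A y) (B y) t|
          ≤ ν * ((t - A y)^2 + B y) ^ (-ν/2-1)
            + ν*(ν+2)*(t - A y)^2 * ((t - A y)^2 + B y) ^ (-ν/2-1-1) := by
            rw [Pf2]
            refine (abs_add_le _ _).trans (le_of_eq ?_)
            simp [abs_mul, abs_neg, abs_of_pos hν, abs_of_pos (show (0:ℝ) < ν+2 by linarith),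
              abs_of_nonneg (sq_nonneg (t - A y)), abs_of_nonneg hn1, abs_of_nonneg hn2]
        _ ≤ ν * m ^ (-ν/2-1) + ν*(ν+2)*M^2 * m ^ (-ν/2-1-1) := by
            refine add_le_add (mul_le_mul_of_nonneg_left hr1 hν.le) ?_
            exact mul_le_mul (mul_le_mul_of_nonneg_left hsq (by positivity)) hr2 hn2
              (by positivity)
    · intro y hy t ht
      exact hasDerivAt_Pf1 ν (hqpos y (ball_subset_closedBall hy) t ht).ne'

lemma mem_cb {y : ℂ} (hy : y ∈ closedBall (0:ℂ) 1) : |y.re| ≤ 1 ∧ |y.im| ≤ 1 := by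
  rw [mem_closedBall_zero_iff] at hy
  exact ⟨(Complex.abs_re_le_norm y).trans hy, (Complex.abs_im_le_norm y).trans hy⟩

lemma q_lower_re {t : ℝ} (ht : 1 < t) {y : ℂ} (hy : y ∈ closedBall (0:ℂ) 1) :
    (t-1)^2 ≤ (t - y.re)^2 + y.im^2 := by
  obtain ⟨h1, -⟩ := mem_cb hy
  have h2 := abs_le.1 h1
  nlinarith [sq_nonneg y.im, mul_nonneg (sub_nonneg.2 h2.2) (by linarith : (0:ℝ) ≤ 2*t - y.re - 1)]

lemma q_lower_im {r : ℝ} (hr : 1 < r) (t : ℝ) {y : ℂ} (hy : y ∈ closedBall (0:ℂ) 1) :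
    (r-1)^2 ≤ (t - y.im)^2 + (r - y.re)^2 := by
  obtain ⟨h1, -⟩ := mem_cb hy
  have h2 := abs_le.1 h1
  nlinarith [sq_nonneg (t - y.im),
    mul_nonneg (sub_nonneg.2 h2.2) (by linarith : (0:ℝ) ≤ 2*r - y.re - 1)]

lemma horiz_deriv (ν : ℝ) (hν : 0 < ν) {r : ℝ} (hr : 1 < r) :
    HasDerivAt (fun t => ∫ y in ball (0:ℂ) 1, Pf ν y.re (y.im^2) t)
      (∫ y in ball (0:ℂ) 1, Pf1 ν y.re (y.im^2) r) r ∧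
    HasDerivAt (fun t => ∫ y in ball (0:ℂ) 1, Pf1 ν y.re (y.im^2) t)
      (∫ y in ball (0:ℂ) 1, Pf2 ν y.re (y.im^2) r) r := by
  apply main_deriv ν hν Complex.re (fun y => y.im^2) Complex.continuous_re
    (Complex.continuous_im.pow 2) r ((r-1)/2) (((r-1)/2)^2) (2*r) (by linarith) (pow_pos (by linarith) 2)
  · intro y hy t ht
    rw [mem_ball, Real.dist_eq] at ht
    have ht' := abs_lt.1 ht
    have h1t : 1 < t := by linarith
    refine le_trans ?_ (q_lower_re h1t hy)
    have : (r-1)/2 ≤ t - 1 := by linarith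
    nlinarith
  · intro y hy t ht
    rw [mem_ball, Real.dist_eq] at ht
    have ht' := abs_lt.1 ht
    obtain ⟨h1, -⟩ := mem_cb hy
    have h2 := abs_le.1 h1
    rw [abs_le]
    constructor <;> linarith

lemma vert_deriv (ν : ℝ) (hν : 0 < ν) {r : ℝ} (hr : 1 < r) {t₀ : ℝ} (ht₀ : t₀ ∈ ball (0:ℝ) 1) :
    HasDerivAt (fun t => ∫ y in ball (0:ℂ) 1, Pf ν y.im ((r - y.re)^2) t)
      (∫ y in ball (0:ℂ) 1, Pf1 ν y.im ((r - y.re)^2) t₀) t₀ ∧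
    HasDerivAt (fun t => ∫ y in ball (0:ℂ) 1, Pf1 ν y.im ((r - y.re)^2) t)
      (∫ y in ball (0:ℂ) 1, Pf2 ν y.im ((r - y.re)^2) t₀) t₀ := by
  rw [mem_ball, Real.dist_eq, sub_zero] at ht₀
  have ht₀' := abs_lt.1 ht₀
  apply main_deriv ν hν Complex.im (fun y => (r - y.re)^2) Complex.continuous_im
    ((continuous_const.sub Complex.continuous_re).pow 2) t₀ 1 ((r-1)^2) 3 one_pos (pow_pos (by linarith) 2)
  · intro y hy t _
    exact q_lower_im hr t hy
  · intro y hy t ht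
    rw [mem_ball, Real.dist_eq] at ht
    have ht' := abs_lt.1 ht
    obtain ⟨-, h1⟩ := mem_cb hy
    have h2 := abs_le.1 h1
    rw [abs_le]
    constructor <;> linarith

lemma sqrt_rpow_neg (ν s : ℝ) (hs : 0 ≤ s) : Real.sqrt s ^ (-ν) = s ^ (-ν/2) := by
  rw [show -ν/2 = (1/2) * (-ν) by ring, Real.rpow_mul hs, ← Real.sqrt_eq_rpow]

lemma abs_eq_Pf (ν t : ℝ) (y : ℂ) :
    ‖(t : ℂ) - y‖ ^ (-ν) = Pf ν y.re (y.im^2) t := by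
  have h1 : ‖(t : ℂ) - y‖ = Real.sqrt ((t - y.re)^2 + y.im^2) := by
    rw [Complex.norm_def, Complex.normSq_apply]
    simp [Complex.sub_re, Complex.sub_im, Complex.ofReal_re, Complex.ofReal_im]
    ring_nf
  rw [h1, Pf, sqrt_rpow_neg ν _ (by positivity)]

lemma abs_eq_Pf' (ν r t : ℝ) (y : ℂ) :
    ‖((r : ℂ) + t * Complex.I) - y‖ ^ (-ν) = Pf ν y.im ((r - y.re)^2) t := by
  have h1 : ‖((r : ℂ) + t * Complex.I) - y‖
      = Real.sqrt ((t - y.im)^2 + (r - y.re)^2) := by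
    rw [Complex.norm_def, Complex.normSq_apply]
    simp [Complex.sub_re, Complex.sub_im, Complex.add_re, Complex.add_im]
    ring_nf
  rw [h1, Pf, sqrt_rpow_neg ν _ (by positivity)]

lemma abs_add_I (r t : ℝ) : ‖(r : ℂ) + t * Complex.I‖ = Real.sqrt (r^2 + t^2) := by
  rw [Complex.norm_def, Complex.normSq_apply]
  simp [Complex.add_re, Complex.add_im]
  ring_nf

lemma rot_invariance (ν : ℝ) (z : ℂ) (hz : z ≠ 0) :
    (∫ y in ball (0:ℂ) 1, ‖z - y‖ ^ (-ν)) =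
      ∫ y in ball (0:ℂ) 1, ‖((‖z‖ : ℝ) : ℂ) - y‖ ^ (-ν) := by
  have habs : (0:ℝ) < ‖z‖ := norm_pos_iff.mpr hz
  set c : ℂ := z / (‖z‖ : ℂ) with hc
  have hcabs : ‖c‖ = 1 := by
    simp [hc, norm_div, habs.ne']
  let u : Circle := ⟨c, mem_sphere_zero_iff_norm.2 (by simpa using hcabs)⟩
  have hu : (u : ℂ) = c := rfl
  have mp : MeasurePreserving (rotation u) volume volume :=
    (rotation u).measurePreserving
  have emb : MeasurableEmbedding (rotation u) :=
    (rotation u).toHomeomorph.measurableEmbedding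
  have hpre : (rotation u) ⁻¹' (ball (0:ℂ) 1) = ball (0:ℂ) 1 := by
    ext y
    simp only [Set.mem_preimage, mem_ball_zero_iff, (rotation u).norm_map]
  have key := mp.setIntegral_preimage_emb emb
    (fun y => ‖z - y‖ ^ (-ν)) (ball (0:ℂ) 1)
  rw [hpre] at key
  rw [← key]
  refine setIntegral_congr_fun measurableSet_ball (fun y _ => ?_)
  have hcz : c * ((‖z‖ : ℝ) : ℂ) = z := by
    rw [hc, div_mul_eq_mul_div, mul_div_assoc, div_self (by exact_mod_cast habs.ne'), mul_one]
  have : z - rotation u y = c * (((‖z‖ : ℝ) : ℂ) - y) := by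
    rw [rotation_apply, hu, mul_sub, hcz]
  rw [this, norm_mul, hcabs, one_mul]

noncomputable def Vf (ν t : ℝ) : ℝ := ∫ y in ball (0:ℂ) 1, Pf ν y.re (y.im^2) t
noncomputable def V1f (ν t : ℝ) : ℝ := ∫ y in ball (0:ℂ) 1, Pf1 ν y.re (y.im^2) t
noncomputable def V2f (ν t : ℝ) : ℝ := ∫ y in ball (0:ℂ) 1, Pf2 ν y.re (y.im^2) t

lemma Vf_hasDeriv (ν : ℝ) (hν : 0 < ν) {r : ℝ} (hr : 1 < r) :
    HasDerivAt (Vf ν) (V1f ν r) r := (horiz_deriv ν hν hr).1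

lemma V1f_hasDeriv (ν : ℝ) (hν : 0 < ν) {r : ℝ} (hr : 1 < r) :
    HasDerivAt (V1f ν) (V2f ν r) r := (horiz_deriv ν hν hr).2

lemma G_eq (ν : ℝ) {r : ℝ} (hr : 1 < r) (t : ℝ) :
    (∫ y in ball (0:ℂ) 1, Pf ν y.im ((r - y.re)^2) t) = Vf ν (Real.sqrt (r^2 + t^2)) := by
  have hz : ((r:ℂ) + t * Complex.I) ≠ 0 := by
    intro h
    have := congrArg Complex.re h
    simp [Complex.add_re] at this
    linarith
  calc (∫ y in ball (0:ℂ) 1, Pf ν y.im ((r - y.re)^2) t)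
      = ∫ y in ball (0:ℂ) 1, ‖((r : ℂ) + t * Complex.I) - y‖ ^ (-ν) :=
        (setIntegral_congr_fun measurableSet_ball (fun y _ => abs_eq_Pf' ν r t y)).symm
    _ = ∫ y in ball (0:ℂ) 1,
          ‖((‖(r:ℂ) + t * Complex.I‖ : ℝ) : ℂ) - y‖ ^ (-ν) :=
        rot_invariance ν _ hz
    _ = Vf ν (Real.sqrt (r^2 + t^2)) := by
        rw [abs_add_I]
        exact setIntegral_congr_fun measurableSet_ball (fun y _ => abs_eq_Pf ν _ y)

lemma sqrt_gt_one {r : ℝ} (hr : 1 < r) (t : ℝ) : 1 < Real.sqrt (r^2 + t^2) := by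
  have h1 : (1:ℝ) < r^2 + t^2 := by nlinarith
  have := Real.sqrt_lt_sqrt (by norm_num) h1
  simpa using this

lemma sqrt_hasDeriv {r : ℝ} (hr : 1 < r) (t : ℝ) :
    HasDerivAt (fun t => Real.sqrt (r^2 + t^2)) (t / Real.sqrt (r^2 + t^2)) t := by
  have hpos : (0:ℝ) < r^2 + t^2 := by nlinarith
  have hinner : HasDerivAt (fun t : ℝ => r^2 + t^2) (2*t) t := by
    simpa using ((hasDerivAt_pow 2 t).const_add (r^2))
  have h := (Real.hasDerivAt_sqrt hpos.ne').comp t hinner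
  refine h.congr_deriv (Eq.symm ?_)
  have hs : Real.sqrt (r^2 + t^2) ≠ 0 := by positivity
  field_simp

lemma sqrt_r0 {r : ℝ} (hr : 1 < r) : Real.sqrt (r^2 + 0^2) = r := by
  rw [show r^2 + 0^2 = r^2 by ring, Real.sqrt_sq (by linarith)]

lemma G2_eq (ν : ℝ) (hν : 0 < ν) {r : ℝ} (hr : 1 < r) :
    (∫ y in ball (0:ℂ) 1, Pf2 ν y.im ((r - y.re)^2) 0) = V1f ν r / r := by
  have h0mem : (0:ℝ) ∈ ball (0:ℝ) 1 := mem_ball_self one_pos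
  -- G1 t = V1f (sqrt(r²+t²)) · t/sqrt(r²+t²) on ball 0 1
  have hGfun : (fun t => ∫ y in ball (0:ℂ) 1, Pf ν y.im ((r - y.re)^2) t)
      = fun t => Vf ν (Real.sqrt (r^2 + t^2)) := funext (G_eq ν hr)
  have hG1eq : ∀ t ∈ ball (0:ℝ) 1, (∫ y in ball (0:ℂ) 1, Pf1 ν y.im ((r - y.re)^2) t)
      = V1f ν (Real.sqrt (r^2 + t^2)) * (t / Real.sqrt (r^2 + t^2)) := by
    intro t ht
    have h1 := (vert_deriv ν hν hr ht).1
    rw [hGfun] at h1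
    have h2 : HasDerivAt (fun t => Vf ν (Real.sqrt (r^2 + t^2)))
        (V1f ν (Real.sqrt (r^2 + t^2)) * (t / Real.sqrt (r^2 + t^2))) t := by
      have := (Vf_hasDeriv ν hν (sqrt_gt_one hr t)).comp t (sqrt_hasDeriv hr t)
      simpa [Function.comp_def] using this
    exact h1.unique h2
  -- second derivative of RHS at 0
  have hf1 : HasDerivAt (fun t => V1f ν (Real.sqrt (r^2 + t^2)))
      (V2f ν r * (0 / Real.sqrt (r^2 + 0^2))) 0 := by
    have h := (V1f_hasDeriv ν hν (by rw [sqrt_r0 hr]; exact hr)).comp 0 (sqrt_hasDeriv hr 0)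
    · simpa [Function.comp_def, sqrt_r0 hr] using h
  have hf2 : HasDerivAt (fun t : ℝ => t / Real.sqrt (r^2 + t^2)) (1/r) 0 := by
    have hr0 : (0:ℝ) < r := by linarith
    have h := (hasDerivAt_id (0:ℝ)).div (sqrt_hasDeriv hr 0) (by rw [sqrt_r0 hr]; exact hr0.ne')
    refine h.congr_deriv (Eq.symm ?_)
    rw [sqrt_r0 hr]
    field_simp
    ring
  have hprod := hf1.mul hf2
  have hrhs : HasDerivAt (fun t => V1f ν (Real.sqrt (r^2 + t^2)) * (t / Real.sqrt (r^2 + t^2)))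
      (V1f ν r / r) 0 := by
    refine hprod.congr_deriv (Eq.symm ?_)
    rw [sqrt_r0 hr]
    simp [sqrt_r0 hr]
    ring
  have hlhs : HasDerivAt (fun t => ∫ y in ball (0:ℂ) 1, Pf1 ν y.im ((r - y.re)^2) t)
      (V1f ν r / r) 0 := by
    apply hrhs.congr_of_eventuallyEq
    filter_upwards [isOpen_ball.mem_nhds h0mem] with t ht
    exact hG1eq t ht
  exact (vert_deriv ν hν hr h0mem).2.unique hlhs

lemma contOn_base (r e : ℝ) (hr : 1 < r) :
    ContinuousOn (fun y : ℂ => ((r - y.re)^2 + y.im^2) ^ e) (closedBall (0:ℂ) 1) :=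
  contOn_rpow e (((continuous_const.sub Complex.continuous_re).pow 2).add
    (Complex.continuous_im.pow 2))
    (fun y hy => (lt_of_lt_of_le (pow_pos (by linarith) 2) (q_lower_re hr hy)).ne')

lemma contOn_base' (r e : ℝ) (hr : 1 < r) :
    ContinuousOn (fun y : ℂ => ((0 - y.im)^2 + (r - y.re)^2) ^ e) (closedBall (0:ℂ) 1) :=
  contOn_rpow e (((continuous_const.sub Complex.continuous_im).pow 2).add
    ((continuous_const.sub Complex.continuous_re).pow 2))
    (fun y hy => (lt_of_lt_of_le (pow_pos (by linarith) 2) (q_lower_im hr 0 hy)).ne')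

lemma int_I1 (ν : ℝ) {r : ℝ} (hr : 1 < r) :
    IntegrableOn (fun y : ℂ => Pf1 ν y.re (y.im^2) r) (ball (0:ℂ) 1) := by
  apply myIntegrableOn
  unfold Pf1
  exact (continuous_const.mul (continuous_const.sub Complex.continuous_re)).continuousOn.mul
    (contOn_base r _ hr)

lemma int_I2h (ν : ℝ) {r : ℝ} (hr : 1 < r) :
    IntegrableOn (fun y : ℂ => Pf2 ν y.re (y.im^2) r) (ball (0:ℂ) 1) := by
  apply myIntegrableOn
  unfold Pf2
  exact (continuous_const.continuousOn.mul (contOn_base r _ hr)).add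
    ((continuous_const.mul ((continuous_const.sub Complex.continuous_re).pow 2)).continuousOn.mul
      (contOn_base r _ hr))

lemma int_I2v (ν : ℝ) {r : ℝ} (hr : 1 < r) :
    IntegrableOn (fun y : ℂ => Pf2 ν y.im ((r - y.re)^2) 0) (ball (0:ℂ) 1) := by
  apply myIntegrableOn
  unfold Pf2
  exact (continuous_const.continuousOn.mul (contOn_base' r _ hr)).add
    ((continuous_const.mul ((continuous_const.sub Complex.continuous_im).pow 2)).continuousOn.mul
      (contOn_base' r _ hr))

lemma vol_pos : 0 < (volume (ball (0:ℂ) 1)).toReal :=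
  ENNReal.toReal_pos (measure_ball_pos volume 0 one_pos).ne' measure_ball_lt_top.ne

lemma V1_neg (ν : ℝ) (hν : 0 < ν) {r : ℝ} (hr : 1 < r) : V1f ν r < 0 := by
  set c : ℝ := ν * (r-1) * (((r+1)^2+1) : ℝ) ^ (-ν/2-1 : ℝ) with hc
  have hcpos : 0 < c := by
    have := Real.rpow_pos_of_pos (show (0:ℝ) < (r+1)^2+1 by positivity) (-ν/2-1 : ℝ)
    have : 0 < ν * (r-1) := by nlinarith
    positivity
  have hb : ∀ y ∈ ball (0:ℂ) 1, Pf1 ν y.re (y.im^2) r ≤ -c := by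
    intro y hy
    have hy' := ball_subset_closedBall hy
    obtain ⟨h1, h2⟩ := mem_cb hy'
    have h1' := abs_le.1 h1
    have h2' := abs_le.1 h2
    have hqlow : (r-1)^2 ≤ (r - y.re)^2 + y.im^2 := q_lower_re hr hy'
    have hqpos : (0:ℝ) < (r - y.re)^2 + y.im^2 :=
      lt_of_lt_of_le (pow_pos (by linarith) 2) hqlow
    have hqQ : (r - y.re)^2 + y.im^2 ≤ (r+1)^2+1 := by nlinarith
    have hE : (((r+1)^2+1 : ℝ)) ^ (-ν/2-1 : ℝ) ≤ ((r - y.re)^2 + y.im^2) ^ (-ν/2-1 : ℝ) :=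
      Real.rpow_le_rpow_of_nonpos hqpos hqQ (by linarith)
    have hEpos : 0 < (((r+1)^2+1 : ℝ)) ^ (-ν/2-1 : ℝ) :=
      Real.rpow_pos_of_pos (by positivity) _
    unfold Pf1
    rw [hc]
    nlinarith [mul_le_mul (show ν * (r-1) ≤ ν * (r - y.re) by nlinarith) hE hEpos.le
      (by nlinarith)]
  have hconst : IntegrableOn (fun _ : ℂ => -c) (ball (0:ℂ) 1) :=
    integrableOn_const measure_ball_lt_top.ne
  have hmono := setIntegral_mono_on (int_I1 ν hr) hconst measurableSet_ball hb
  rw [setIntegral_const] at hmono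
  have := vol_pos
  calc V1f ν r ≤ (volume (ball (0:ℂ) 1)).toReal • (-c) := hmono
    _ < 0 := by
        rw [smul_eq_mul]
        nlinarith

lemma lap_pt (ν r : ℝ) {y : ℂ} (hq : ((r - y.re)^2 + y.im^2) ≠ 0) :
    Pf2 ν y.re (y.im^2) r + Pf2 ν y.im ((r - y.re)^2) 0
      = ν^2 * ((r - y.re)^2 + y.im^2) ^ (-ν/2-1 : ℝ) := by
  have hbase : ((0:ℝ) - y.im)^2 + (r - y.re)^2 = (r - y.re)^2 + y.im^2 := by ring
  have hX : ((r - y.re)^2 + y.im^2) ^ (-ν/2-1 : ℝ)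
      = ((r - y.re)^2 + y.im^2) ^ (-ν/2-1-1 : ℝ) * ((r - y.re)^2 + y.im^2) := by
    rw [← Real.rpow_add_one hq (-ν/2-1-1)]
    congr 1
    ring
  unfold Pf2
  rw [hbase, hX]
  ring

lemma lap_pos (ν : ℝ) (hν : 0 < ν) {r : ℝ} (hr : 1 < r) : 0 < V2f ν r + V1f ν r / r := by
  rw [← G2_eq ν hν hr]
  have hsum : V2f ν r + (∫ y in ball (0:ℂ) 1, Pf2 ν y.im ((r - y.re)^2) 0)
      = ∫ y in ball (0:ℂ) 1,
          (Pf2 ν y.re (y.im^2) r + Pf2 ν y.im ((r - y.re)^2) 0) := by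
    rw [integral_add (int_I2h ν hr) (int_I2v ν hr)]
    rfl
  rw [hsum]
  set c : ℝ := ν^2 * (((r+1)^2+1) : ℝ) ^ (-ν/2-1 : ℝ) with hc
  have hcpos : 0 < c := by
    have := Real.rpow_pos_of_pos (show (0:ℝ) < (r+1)^2+1 by positivity) (-ν/2-1 : ℝ)
    positivity
  have hb : ∀ y ∈ ball (0:ℂ) 1,
      c ≤ Pf2 ν y.re (y.im^2) r + Pf2 ν y.im ((r - y.re)^2) 0 := by
    intro y hy
    have hy' := ball_subset_closedBall hy
    obtain ⟨h1, h2⟩ := mem_cb hy'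
    have h1' := abs_le.1 h1
    have h2' := abs_le.1 h2
    have hqlow : (r-1)^2 ≤ (r - y.re)^2 + y.im^2 := q_lower_re hr hy'
    have hqpos : (0:ℝ) < (r - y.re)^2 + y.im^2 :=
      lt_of_lt_of_le (pow_pos (by linarith) 2) hqlow
    have hqQ : (r - y.re)^2 + y.im^2 ≤ (r+1)^2+1 := by nlinarith
    have hE : (((r+1)^2+1 : ℝ)) ^ (-ν/2-1 : ℝ) ≤ ((r - y.re)^2 + y.im^2) ^ (-ν/2-1 : ℝ) :=
      Real.rpow_le_rpow_of_nonpos hqpos hqQ (by linarith)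
    rw [lap_pt ν r hqpos.ne', hc]
    nlinarith
  have hconst : IntegrableOn (fun _ : ℂ => c) (ball (0:ℂ) 1) :=
    integrableOn_const measure_ball_lt_top.ne
  have hmono := setIntegral_mono_on hconst ((int_I2h ν hr).add (int_I2v ν hr))
    measurableSet_ball hb
  rw [setIntegral_const] at hmono
  have := vol_pos
  calc (0:ℝ) < (volume (ball (0:ℂ) 1)).toReal • c := by rw [smul_eq_mul]; nlinarith
    _ ≤ _ := hmono

lemma sq_rpow {x : ℝ} (hx : 0 ≤ x) (e : ℝ) : ((x^2 : ℝ)) ^ e = x ^ (2*e) := by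
  rw [← Real.rpow_natCast x 2, ← Real.rpow_mul hx]
  norm_num

lemma V1_upper (ν : ℝ) (hν : 0 < ν) {r : ℝ} (hr : 1 < r) :
    -(V1f ν r) ≤ ν * (r+1) * ((r-1) : ℝ) ^ (-(ν+2) : ℝ) * (volume (ball (0:ℂ) 1)).toReal := by
  have hE : ((r-1) : ℝ) ^ (-(ν+2) : ℝ) = (((r-1)^2 : ℝ)) ^ (-ν/2-1 : ℝ) := by
    rw [sq_rpow (by linarith : (0:ℝ) ≤ r-1)]
    congr 1
    ring
  rw [hE]
  have hneg : -(V1f ν r) = ∫ y in ball (0:ℂ) 1, -(Pf1 ν y.re (y.im^2) r) := by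
    rw [V1f, ← integral_neg]
  rw [hneg]
  set c : ℝ := ν * (r+1) * (((r-1)^2 : ℝ)) ^ (-ν/2-1 : ℝ) with hc
  have hb : ∀ y ∈ ball (0:ℂ) 1, -(Pf1 ν y.re (y.im^2) r) ≤ c := by
    intro y hy
    have hy' := ball_subset_closedBall hy
    obtain ⟨h1, -⟩ := mem_cb hy'
    have h1' := abs_le.1 h1
    have hqlow : (r-1)^2 ≤ (r - y.re)^2 + y.im^2 := q_lower_re hr hy'
    have hqpos : (0:ℝ) < (r - y.re)^2 + y.im^2 :=
      lt_of_lt_of_le (pow_pos (by linarith) 2) hqlow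
    have hE2 : ((r - y.re)^2 + y.im^2) ^ (-ν/2-1 : ℝ) ≤ (((r-1)^2 : ℝ)) ^ (-ν/2-1 : ℝ) :=
      Real.rpow_le_rpow_of_nonpos (pow_pos (by linarith) 2) hqlow (by linarith)
    have hn : (0:ℝ) ≤ ((r - y.re)^2 + y.im^2) ^ (-ν/2-1 : ℝ) := Real.rpow_nonneg hqpos.le _
    unfold Pf1
    rw [hc]
    nlinarith [mul_le_mul (show ν * (r - y.re) ≤ ν * (r+1) by nlinarith) hE2 hn (by nlinarith)]
  have hconst : IntegrableOn (fun _ : ℂ => c) (ball (0:ℂ) 1) :=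
    integrableOn_const measure_ball_lt_top.ne
  have hmono := setIntegral_mono_on (int_I1 ν hr).neg hconst measurableSet_ball hb
  rw [setIntegral_const, smul_eq_mul] at hmono
  calc (∫ y in ball (0:ℂ) 1, -(Pf1 ν y.re (y.im^2) r))
      ≤ (volume (ball (0:ℂ) 1)).toReal * c := hmono
    _ = c * (volume (ball (0:ℂ) 1)).toReal := by ring

/-- For `ν ∈ (0,1]`, the potential `U(r) = −∫_𝔻 |r − y|^{−ν} dy` is differentiable on
`(1,∞)`, `r ↦ U'(r)/r` is strictly decreasing on `(1,∞)`, and `U'(r)/r → 0` as `r → ∞`. -/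
theorem stmt9 (ν : ℝ) (hν : ν ∈ Set.Ioc (0 : ℝ) 1)
    (U : ℝ → ℝ)
    (hU : ∀ r : ℝ, U r = -∫ y in ball (0 : ℂ) 1, ‖(r : ℂ) - y‖ ^ (-ν)) :
    (∀ r : ℝ, 1 < r → DifferentiableAt ℝ U r) ∧
    StrictAntiOn (fun r => deriv U r / r) (Set.Ioi 1) ∧
    Tendsto (fun r => deriv U r / r) atTop (nhds 0) := by
  obtain ⟨hν0, -⟩ := hν
  have hUV : U = fun t => -(Vf ν t) := by
    funext t
    rw [hU t, Vf]
    congr 1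
    exact setIntegral_congr_fun measurableSet_ball (fun y _ => abs_eq_Pf ν t y)
  have hU' : ∀ r : ℝ, 1 < r → HasDerivAt U (-(V1f ν r)) r := by
    intro r hr
    rw [hUV]
    exact (Vf_hasDeriv ν hν0 hr).neg
  have hderivU : ∀ r : ℝ, 1 < r → deriv U r = -(V1f ν r) := fun r hr => (hU' r hr).deriv
  have hφd : ∀ r ∈ Set.Ioi (1:ℝ), HasDerivAt (fun s => deriv U s / s)
      ((-(V2f ν r) * r - (-(V1f ν r)) * 1) / r^2) r := by
    intro r hr
    rw [Set.mem_Ioi] at hr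
    have hr0 : (0:ℝ) < r := lt_trans one_pos hr
    have hψ : HasDerivAt (fun s => -(V1f ν s) / s)
        ((-(V2f ν r) * r - (-(V1f ν r)) * 1) / r^2) r :=
      ((V1f_hasDeriv ν hν0 hr).neg).div (hasDerivAt_id r) hr0.ne'
    apply hψ.congr_of_eventuallyEq
    filter_upwards [Ioi_mem_nhds hr] with s hs
    rw [hderivU s hs]
  refine ⟨fun r hr => (hU' r hr).differentiableAt, ?_, ?_⟩
  · apply strictAntiOn_of_deriv_neg (convex_Ioi 1)
    · exact fun r hr => ((hφd r hr).continuousAt).continuousWithinAt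
    · intro r hr
      rw [interior_Ioi] at hr
      rw [(hφd r hr).deriv]
      have hr1 : 1 < r := hr
      have hr0 : (0:ℝ) < r := lt_trans one_pos hr1
      have h1 := V1_neg ν hν0 hr1
      have h2 := lap_pos ν hν0 hr1
      apply div_neg_of_neg_of_pos _ (by positivity)
      have key : r * (V2f ν r + V1f ν r / r) = r * V2f ν r + V1f ν r := by field_simp
      nlinarith [mul_pos hr0 h2]
  · have hvol := vol_pos
    set vol := (volume (ball (0:ℂ) 1)).toReal with hvoldef
    have h1 : Tendsto (fun r : ℝ => (r-1) ^ (-(ν+2) : ℝ)) atTop (nhds 0) := by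
      have h := (tendsto_rpow_neg_atTop (show (0:ℝ) < ν+2 by linarith)).comp
        (tendsto_atTop_add_const_right atTop (-1) tendsto_id)
      simpa [Function.comp_def, sub_eq_add_neg] using h
    have hg : Tendsto (fun r : ℝ => (2*ν*vol) * (r-1) ^ (-(ν+2) : ℝ)) atTop (nhds 0) := by
      simpa using h1.const_mul (2*ν*vol)
    apply squeeze_zero' (g := fun r : ℝ => (2*ν*vol) * (r-1) ^ (-(ν+2) : ℝ))
    · filter_upwards [eventually_ge_atTop (2:ℝ)] with r hr
      have hr1 : 1 < r := by linarith
      have hr0 : (0:ℝ) < r := by linarith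
      rw [hderivU r hr1]
      have := V1_neg ν hν0 hr1
      apply div_nonneg (by linarith) hr0.le
    · filter_upwards [eventually_ge_atTop (2:ℝ)] with r hr
      have hr1 : 1 < r := by linarith
      have hr0 : (0:ℝ) < r := by linarith
      rw [hderivU r hr1]
      rw [div_le_iff₀ hr0]
      have hup := V1_upper ν hν0 hr1
      rw [← hvoldef] at hup
      have hrp : (0:ℝ) ≤ (r-1) ^ (-(ν+2) : ℝ) := Real.rpow_nonneg (by linarith) _
      nlinarith [mul_nonneg (mul_nonneg (mul_nonneg hν0.le (by linarith : (0:ℝ) ≤ r-1)) hrp)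
        hvol.le]
    · exact hg
end

section
/- For every integer n ≥ 1, the integral over the open unit disk with respect to planar Lebesgue measure satisfies ∫_𝔻 y^n·log|1 − y| dy = −π/(2n(n+1)), where the left-hand side is an integral of a complex-valued function whose value is the real number −π/(2n(n+1)). -/
open Metric MeasureTheory Real Set

lemma ang_int (l : ℤ) :
    ∫ θ in Ioo (-π) π, Complex.exp ((l : ℂ) * θ * Complex.I) =
      if l = 0 then (2 * π : ℂ) else 0 := by
  rw [← integral_Ioc_eq_integral_Ioo,
    ← intervalIntegral.integral_of_le (by linarith [pi_pos] : -π ≤ π)]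
  rcases eq_or_ne l 0 with rfl | hl
  · simp [two_mul]
  · rw [if_neg hl]
    have hre : ∀ θ : ℝ, (l : ℂ) * θ * Complex.I = ((l : ℂ) * Complex.I) * θ := by
      intro θ; ring
    simp_rw [hre]
    rw [integral_exp_mul_complex (by simp [hl, Complex.I_ne_zero])]
    have : (l : ℂ) * Complex.I * π = (l : ℂ) * Complex.I * (-π) + l * (2 * π * Complex.I) := by
      ring
    push_cast
    rw [this, Complex.exp_add, Complex.exp_int_mul_two_pi_mul_I, mul_one, sub_self, zero_div]

lemma rad_int (j : ℕ) :
    ∫ r in Ioo (0:ℝ) 1, ((r : ℂ)) ^ j = (((j : ℝ) + 1)⁻¹ : ℝ) := by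
  have : ∀ r : ℝ, ((r : ℂ)) ^ j = ((r ^ j : ℝ) : ℂ) := by intro r; push_cast; ring
  simp_rw [this]
  have h2 : ∫ r in Ioo (0:ℝ) 1, ((r ^ j : ℝ) : ℂ) = ((∫ r in Ioo (0:ℝ) 1, r ^ j : ℝ) : ℂ) :=
    integral_ofReal
  rw [h2]
  norm_cast
  rw [← integral_Ioc_eq_integral_Ioo, ← intervalIntegral.integral_of_le zero_le_one,
    integral_pow]
  simp

lemma disk_monomial (m k : ℕ) :
    ∫ y in ball (0:ℂ) 1, y ^ m * (starRingEnd ℂ y) ^ k =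
      if m = k then ((π / (m + 1) : ℝ) : ℂ) else 0 := by
  set S : Set (ℝ × ℝ) := Ioo (0:ℝ) 1 ×ˢ Ioo (-π) π with hS_def
  set F : ℝ × ℝ → ℂ := fun p =>
    ((p.1:ℂ)) ^ (m + k + 1) * Complex.exp ((((m:ℤ) - (k:ℤ) : ℤ) : ℂ) * p.2 * Complex.I)
    with hF_def
  set f : ℂ → ℂ := (ball (0:ℂ) 1).indicator (fun y => y ^ m * (starRingEnd ℂ y) ^ k) with hf_def
  have h1 : ∫ y in ball (0:ℂ) 1, y ^ m * (starRingEnd ℂ y) ^ k = ∫ y, f y :=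
    (integral_indicator measurableSet_ball).symm
  rw [h1, ← Complex.integral_comp_polarCoord_symm]
  have hSsub : S ⊆ polarCoord.target := by
    rw [polarCoord_target]
    exact Set.prod_mono Ioo_subset_Ioi_self subset_rfl
  have key : Set.EqOn (fun p : ℝ × ℝ => p.1 • f (Complex.polarCoord.symm p)) (S.indicator F)
      polarCoord.target := by
    intro p hp
    rw [polarCoord_target] at hp
    obtain ⟨hr, hθ⟩ := hp
    have hr0 : (0:ℝ) < p.1 := hr
    have hsymm : Complex.polarCoord.symm p = (p.1 : ℂ) * Complex.exp ((p.2:ℂ) * Complex.I) := by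
      rw [Complex.polarCoord_symm_apply, Complex.exp_mul_I]
      simp [Complex.ofReal_cos, Complex.ofReal_sin]
    have hmem : Complex.polarCoord.symm p ∈ ball (0:ℂ) 1 ↔ p.1 < 1 := by
      rw [mem_ball_zero_iff, Complex.norm_polarCoord_symm,
        abs_of_pos hr0]
    by_cases h1 : p.1 < 1
    · have hpS : p ∈ S := ⟨⟨hr0, h1⟩, hθ⟩
      rw [Set.indicator_of_mem hpS]
      simp only [hf_def]
      rw [Set.indicator_of_mem (hmem.mpr h1), hsymm]
      simp only [hF_def]
      have hconj : (starRingEnd ℂ) ((p.1 : ℂ) * Complex.exp ((p.2:ℂ) * Complex.I)) =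
          (p.1 : ℂ) * Complex.exp (-((p.2:ℂ) * Complex.I)) := by
        rw [map_mul, Complex.conj_ofReal, ← Complex.exp_conj]
        congr 1
        simp
      rw [hconj, mul_pow, mul_pow, ← Complex.exp_nat_mul, ← Complex.exp_nat_mul,
        Complex.real_smul]
      have hexp : Complex.exp ((m:ℂ) * ((p.2:ℂ) * Complex.I)) *
          Complex.exp ((k:ℂ) * -((p.2:ℂ) * Complex.I)) =
          Complex.exp ((((m:ℤ) - (k:ℤ) : ℤ) : ℂ) * p.2 * Complex.I) := by
        rw [← Complex.exp_add]
        congr 1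
        push_cast
        ring
      rw [← hexp]
      ring
    · have hpS : p ∉ S := fun h => h1 h.1.2
      rw [Set.indicator_of_notMem hpS]
      simp only [hf_def, Set.indicator_of_notMem (fun h => h1 (hmem.mp h))]
      simp
  rw [setIntegral_congr_fun polarCoord.open_target.measurableSet key,
    setIntegral_indicator (measurableSet_Ioo.prod measurableSet_Ioo),
    Set.inter_eq_self_of_subset_right hSsub]
  rw [hS_def, hF_def, Measure.volume_eq_prod,
    setIntegral_prod_mul (fun r : ℝ => ((r:ℂ)) ^ (m + k + 1))
      (fun θ : ℝ => Complex.exp ((((m:ℤ) - (k:ℤ) : ℤ) : ℂ) * θ * Complex.I))]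
  rw [rad_int, ang_int]
  rcases eq_or_ne m k with rfl | hmk
  · rw [if_pos (sub_self (m:ℤ)), if_pos rfl]
    push_cast
    have h4 : ((m:ℂ) + 1) ≠ 0 := by
      intro h
      have : ((m:ℝ) + 1 : ℝ) = 0 := by exact_mod_cast h
      have : (0:ℝ) < (m:ℝ) + 1 := by positivity
      linarith
    rw [show ((m:ℂ) + m + 1 + 1) = 2 * ((m:ℂ) + 1) by ring, mul_inv]
    field_simp
  · rw [if_neg (by omega), if_neg hmk, mul_zero]

lemma disk_abs_pow (j : ℕ) :
    ∫ y in ball (0:ℂ) 1, ‖y‖ ^ j = 2 * π / ((j : ℝ) + 2) := by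
  set S : Set (ℝ × ℝ) := Ioo (0:ℝ) 1 ×ˢ Ioo (-π) π with hS_def
  set f : ℂ → ℝ := (ball (0:ℂ) 1).indicator (fun y => ‖y‖ ^ j) with hf_def
  have h1 : ∫ y in ball (0:ℂ) 1, ‖y‖ ^ j = ∫ y, f y :=
    (integral_indicator measurableSet_ball).symm
  rw [h1, ← Complex.integral_comp_polarCoord_symm]
  have hSsub : S ⊆ polarCoord.target := by
    rw [polarCoord_target]
    exact Set.prod_mono Ioo_subset_Ioi_self subset_rfl
  have key : Set.EqOn (fun p : ℝ × ℝ => p.1 • f (Complex.polarCoord.symm p))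
      (S.indicator (fun p => p.1 ^ (j + 1) * 1)) polarCoord.target := by
    intro p hp
    rw [polarCoord_target] at hp
    obtain ⟨hr, hθ⟩ := hp
    have hr0 : (0:ℝ) < p.1 := hr
    have habs : ‖Complex.polarCoord.symm p‖ = p.1 := by
      rw [Complex.norm_polarCoord_symm, abs_of_pos hr0]
    have hmem : Complex.polarCoord.symm p ∈ ball (0:ℂ) 1 ↔ p.1 < 1 := by
      rw [mem_ball_zero_iff, habs]
    by_cases h1 : p.1 < 1
    · have hpS : p ∈ S := ⟨⟨hr0, h1⟩, hθ⟩
      rw [Set.indicator_of_mem hpS]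
      simp only [hf_def]
      rw [Set.indicator_of_mem (hmem.mpr h1), habs]
      simp only [smul_eq_mul, mul_one]
      ring
    · rw [Set.indicator_of_notMem (fun h => h1 h.1.2)]
      simp only [hf_def, Set.indicator_of_notMem (fun h => h1 (hmem.mp h))]
      simp
  rw [setIntegral_congr_fun polarCoord.open_target.measurableSet key,
    setIntegral_indicator (measurableSet_Ioo.prod measurableSet_Ioo),
    Set.inter_eq_self_of_subset_right hSsub]
  rw [hS_def, Measure.volume_eq_prod,
    setIntegral_prod_mul (fun r : ℝ => r ^ (j + 1)) (fun _ : ℝ => (1 : ℝ))]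
  rw [← integral_Ioc_eq_integral_Ioo, ← intervalIntegral.integral_of_le zero_le_one,
    integral_pow]
  rw [setIntegral_const, Real.volume_real_Ioo_of_le (by linarith [pi_pos] : -π ≤ π), smul_eq_mul, mul_one]
  have : ((j:ℝ) + 2) ≠ 0 := by positivity
  field_simp
  push_cast
  ring

lemma cont_intOn {E : Type*} [NormedAddCommGroup E] {g : ℂ → E} (hg : Continuous g) :
    IntegrableOn g (ball (0:ℂ) 1) :=
  (hg.continuousOn.integrableOn_compact (isCompact_closedBall 0 1)).mono_set
    ball_subset_closedBall

/-- For `n ≥ 1`, `∫_𝔻 y^n log|1−y| dy = −π/(2n(n+1))`. -/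
theorem stmt16 (n : ℕ) (hn : 1 ≤ n) :
    ∫ y in ball (0 : ℂ) 1, (y ^ n * ((Real.log (‖1 - y‖) : ℝ) : ℂ)) =
      ((-(Real.pi / (2 * (n : ℝ) * ((n : ℝ) + 1))) : ℝ) : ℂ) := by
  set F : ℕ → ℂ → ℂ := fun k y => y ^ n * (((y ^ k / (k : ℂ)).re : ℝ) : ℂ) with hF_def
  have hcont : ∀ k, Continuous (F k) := by
    intro k
    exact (continuous_pow n).mul
      (Complex.continuous_ofReal.comp (Complex.continuous_re.comp
        ((continuous_pow k).div_const _)))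
  have hFint : ∀ k, IntegrableOn (F k) (ball (0:ℂ) 1) := fun k => cont_intOn (hcont k)
  -- pointwise series identity
  have hkey : Set.EqOn (fun y : ℂ => y ^ n * ((Real.log (‖1 - y‖) : ℝ) : ℂ))
      (fun y : ℂ => -∑' k, F k y) (ball (0:ℂ) 1) := by
    intro y hy
    have hy1 : ‖y‖ < 1 := mem_ball_zero_iff.mp hy
    have hs4 := (((Complex.hasSum_taylorSeries_neg_log hy1).mapL
      Complex.reCLM).mapL Complex.ofRealCLM).mul_left (y ^ n)
    simp only [Complex.reCLM_apply, Complex.ofRealCLM_apply] at hs4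
    have ht : ∑' k, F k y = y ^ n * (((-Complex.log (1 - y)).re : ℝ) : ℂ) := hs4.tsum_eq
    simp only [Complex.neg_re, Complex.log_re, Complex.ofReal_neg] at ht
    simp only [ht]
    ring
  rw [setIntegral_congr_fun measurableSet_ball hkey, integral_neg]
  -- summability of norms
  have hbound : ∀ k : ℕ, (∫ y in ball (0:ℂ) 1, ‖F k y‖) ≤ 2 * π * (((k:ℝ))⁻¹ * ((k:ℝ))⁻¹) := by
    intro k
    rcases Nat.eq_zero_or_pos k with rfl | hk
    · simp [hF_def]
    have step1 : (∫ y in ball (0:ℂ) 1, ‖F k y‖) ≤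
        ∫ y in ball (0:ℂ) 1, ((k:ℝ))⁻¹ * ‖y‖ ^ (n + k) := by
      apply setIntegral_mono_on ((hFint k).norm)
        ((cont_intOn (continuous_norm.pow (n+k))).const_mul _) measurableSet_ball
      intro y _
      have : ‖F k y‖ = ‖y‖ ^ n * |(y ^ k / (k:ℂ)).re| := by
        simp only [hF_def, norm_mul, norm_pow, Complex.norm_real, Real.norm_eq_abs]
      rw [this]
      have h2 : |(y ^ k / (k:ℂ)).re| ≤ ‖y ^ k / (k:ℂ)‖ := Complex.abs_re_le_norm _
      have h3 : ‖y ^ k / (k:ℂ)‖ = ‖y‖ ^ k / (k:ℝ) := by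
        rw [norm_div, norm_pow, Complex.norm_natCast]
      calc ‖y‖ ^ n * |(y ^ k / (k:ℂ)).re|
          ≤ ‖y‖ ^ n * (‖y‖ ^ k / (k:ℝ)) := by
            apply mul_le_mul_of_nonneg_left (h3 ▸ h2) (by positivity)
        _ = ((k:ℝ))⁻¹ * ‖y‖ ^ (n + k) := by
            rw [pow_add]; field_simp
    have step2 : (∫ y in ball (0:ℂ) 1, ((k:ℝ))⁻¹ * ‖y‖ ^ (n + k)) =
        ((k:ℝ))⁻¹ * (2 * π / ((n + k : ℕ) + 2)) := by
      rw [integral_const_mul, disk_abs_pow]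
    refine step1.trans (step2.trans_le ?_)
    have hk1 : (1:ℝ) ≤ (k:ℝ) := by exact_mod_cast hk
    have h5 : 2 * π / ((n + k : ℕ) + 2) ≤ 2 * π * ((k:ℝ))⁻¹ := by
      rw [div_eq_mul_inv]
      apply mul_le_mul_of_nonneg_left _ (by positivity)
      apply inv_anti₀ (by linarith)
      push_cast; linarith
    calc ((k:ℝ))⁻¹ * (2 * π / ((n + k : ℕ) + 2)) ≤ ((k:ℝ))⁻¹ * (2 * π * ((k:ℝ))⁻¹) := by
          apply mul_le_mul_of_nonneg_left h5 (by positivity)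
      _ = 2 * π * (((k:ℝ))⁻¹ * ((k:ℝ))⁻¹) := by ring
  have hsummable : Summable (fun k : ℕ => ∫ y in ball (0:ℂ) 1, ‖F k y‖) := by
    apply Summable.of_nonneg_of_le (fun k => integral_nonneg (fun y => norm_nonneg _)) hbound
    have : Summable (fun k : ℕ => (((k:ℝ)) ^ 2)⁻¹) := Real.summable_nat_pow_inv.mpr one_lt_two
    simpa [pow_two, mul_inv] using this.mul_left (2 * π)
  rw [← integral_tsum_of_summable_integral_norm hFint hsummable]
  -- compute each integral
  have hint : ∀ k : ℕ, (∫ y in ball (0:ℂ) 1, F k y) =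
      if k = n then ((π / (2 * (n:ℝ) * ((n:ℝ) + 1)) : ℝ) : ℂ) else 0 := by
    intro k
    have hptw : ∀ y : ℂ, F k y =
        ((2 * (k:ℂ)))⁻¹ * (y ^ (n + k) * (starRingEnd ℂ y) ^ 0 + y ^ n * (starRingEnd ℂ y) ^ k) := by
      intro y
      have hre : (((y ^ k / (k:ℂ)).re : ℝ) : ℂ) =
          (y ^ k / (k:ℂ) + (starRingEnd ℂ y) ^ k / (k:ℂ)) / 2 := by
        have := Complex.add_conj (y ^ k / (k:ℂ))
        have hc : (starRingEnd ℂ) (y ^ k / (k:ℂ)) = (starRingEnd ℂ y) ^ k / (k:ℂ) := by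
          rw [map_div₀, map_pow, map_natCast]
        rw [hc] at this
        rw [this]
        push_cast
        ring
      simp only [hF_def, hre, pow_zero]
      rw [pow_add]
      field_simp
    simp_rw [hptw]
    rw [integral_const_mul, integral_add
      (cont_intOn ((continuous_pow (n+k)).mul ((Complex.continuous_conj.pow 0))) :
        Integrable (fun y : ℂ => y ^ (n + k) * (starRingEnd ℂ) y ^ 0) (volume.restrict (ball (0:ℂ) 1)))
      (cont_intOn ((continuous_pow n).mul ((Complex.continuous_conj.pow k))) :
        Integrable (fun y : ℂ => y ^ n * (starRingEnd ℂ) y ^ k) (volume.restrict (ball (0:ℂ) 1))),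
      disk_monomial (n+k) 0, disk_monomial n k, if_neg (by omega : ¬ n + k = 0), zero_add]
    rcases eq_or_ne k n with rfl | hkn
    · rw [if_pos rfl, if_pos rfl]
      have hk0 : ((k:ℂ)) ≠ 0 := Nat.cast_ne_zero.mpr (by omega)
      have hk1 : ((k:ℂ) + 1) ≠ 0 := by
        intro h
        have : ((k:ℝ) + 1 : ℝ) = 0 := by exact_mod_cast h
        have : (0:ℝ) < (k:ℝ) + 1 := by positivity
        linarith
      push_cast
      rw [mul_inv]
      field_simp
    · rw [if_neg (fun h => hkn h.symm), if_neg hkn, mul_zero]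
  rw [funext hint, tsum_ite_eq]
  rw [← Complex.ofReal_neg]
end
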